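/- arXiv:1011.2308 — 7 statements merged into one kernel-verified Lean document; each statement's English description precedes it below -/
import Mathlib

section
/- The number of trees on n labeled vertices is n^(n-2) for every integer n ≥ 2 (Cayley's formula). -/
/-!
Joyal's bijective proof. A tree on `V` with a chosen root `r` is the same thing as a map
`f : V → V` whose only periodic point is `r`: every other vertex points to its neighbour on the
way to `r`. So it suffices to see that the `|V| ^ |V|` endofunctions of `V` are as many as the
vertebrates `(a, b, f)`, trees rooted at `b` with a marked vertex `a`, which number `|V| ^ 2`
times the trees. Both kinds of objects split into a subset `S ⊆ V` and a forest rooted at `S`: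
a map `g` into the permutation it induces on its periodic points `S` and the forest pulling all
other vertices into `S`; a vertebrate into its spine, the path from `a` to `b` read as a linear
ordering of its vertex set `S`, and the forest hanging off the spine. Permutations and linear
orderings of `S` are equinumerous.
-/

open Function Set

namespace Function

variable {α : Type*} {f g : α → α} {s : Set α} {x r : α}

theorem exists_iterate_mem_periodicPts [Finite α] (f : α → α) (x : α) :
    ∃ k, f^[k] x ∈ periodicPts f := by
  obtain ⟨i, j, hne, hij⟩ := Finite.exists_ne_map_eq_of_infinite (f^[·] x)
  wlog hlt : i < j generalizing i j
  · exact this j i hne.symm hij.symm (by omega)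
  refine ⟨i, mk_mem_periodicPts (n := j - i) (by omega) ?_⟩
  rw [IsPeriodicPt, IsFixedPt, ← iterate_add_apply, Nat.sub_add_cancel hlt.le, hij]

theorem apply_eq_of_periodicPts_eq_singleton (hf : periodicPts f = {r}) : f r = r := by
  have := (bijOn_periodicPts (f := f)).mapsTo (hf ▸ mem_singleton r : r ∈ periodicPts f)
  rwa [hf, mem_singleton_iff] at this

theorem iterate_notMem_of_mapsTo (hf : MapsTo f s s) (hx : x ∈ periodicPts f) (hxs : x ∉ s)
    (i : ℕ) : f^[i] x ∉ s := by
  obtain ⟨n, hn, hper⟩ := mem_periodicPts.mp hx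
  intro hi
  have h := hf.iterate (n * i - i) hi
  rw [← iterate_add_apply, Nat.sub_add_cancel (Nat.le_mul_of_pos_left i hn),
    (hper.mul_const i).eq] at h
  exact hxs h

theorem mem_periodicPts_of_eqOn_compl (hf : MapsTo f s s) (hfg : EqOn f g sᶜ)
    (hx : x ∈ periodicPts f) (hxs : x ∉ s) : x ∈ periodicPts g := by
  have hiter (i : ℕ) : f^[i] x = g^[i] x := by
    induction i with
    | zero => rfl
    | succ i ih =>
      rw [iterate_succ_apply', iterate_succ_apply', ← ih]
      exact hfg (iterate_notMem_of_mapsTo hf hx hxs i)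
  obtain ⟨n, hn, hper⟩ := mem_periodicPts.mp hx
  exact mk_mem_periodicPts hn (by rw [IsPeriodicPt, IsFixedPt, ← hiter]; exact hper)

theorem periodicPts_subset_singleton_of_lt (φ : α → ℕ) (hr : f r = r)
    (hφ : ∀ v, v ≠ r → φ (f v) < φ v) : periodicPts f ⊆ {r} := by
  intro v hv
  by_contra hvr
  have hfr : MapsTo f {r} {r} := by simp [MapsTo, hr]
  have hdec (i : ℕ) : φ (f^[i + 1] v) < φ v := by
    induction i with
    | zero => exact hφ v hvr
    | succ i ih =>
      rw [iterate_succ_apply']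
      exact (hφ _ (iterate_notMem_of_mapsTo hfr hv hvr (i + 1))).trans ih
  obtain ⟨n, hn, hper⟩ := mem_periodicPts.mp hv
  have := hdec (n - 1)
  rw [Nat.sub_add_cancel hn, hper.eq] at this
  exact lt_irrefl _ this

end Function

namespace SimpleGraph

variable {V : Type*}

def fromFun (f : V → V) : SimpleGraph V := fromRel fun u v => f u = v

variable {f g : V → V} {r : V}

@[simp]
theorem fromFun_adj {u v : V} : (fromFun f).Adj u v ↔ u ≠ v ∧ (f u = v ∨ f v = u) :=
  fromRel_adj _ u v

theorem fromFun_reachable_iterate (f : V → V) (v : V) (k : ℕ) :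
    (fromFun f).Reachable v (f^[k] v) := by
  induction k with
  | zero => rfl
  | succ k ih =>
    refine ih.trans ?_
    rw [iterate_succ_apply']
    by_cases h : f^[k] v = f (f^[k] v)
    · rw [← h]
    · exact (fromFun_adj.mpr ⟨h, Or.inl rfl⟩).reachable

theorem Connected.exists_adj_dist_lt {G : SimpleGraph V} (hG : G.Connected) {v : V}
    (hv : v ≠ r) : ∃ w, G.Adj v w ∧ G.dist w r < G.dist v r := by
  obtain ⟨p, hp⟩ := (hG v r).exists_walk_length_eq_dist
  have hnil : ¬p.Nil := Walk.not_nil_of_ne hv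
  refine ⟨p.snd, p.adj_snd hnil, ?_⟩
  have := dist_le p.tail
  have := p.length_tail_add_one hnil
  omega

variable [Finite V]

theorem connected_fromFun (hf : periodicPts f = {r}) : (fromFun f).Connected := by
  have hreach (v : V) : (fromFun f).Reachable v r := by
    obtain ⟨k, hk⟩ := exists_iterate_mem_periodicPts f v
    rw [hf, mem_singleton_iff] at hk
    exact hk ▸ fromFun_reachable_iterate f v k
  have : Nonempty V := ⟨r⟩
  exact ⟨fun u v => (hreach u).trans (hreach v).symm⟩

theorem ncard_edgeSet_fromFun_le (hr : f r = r) :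
    (fromFun f).edgeSet.ncard ≤ Nat.card V - 1 := by
  have hsub : (fromFun f).edgeSet ⊆ (fun v => s(v, f v)) '' {r}ᶜ := by
    rintro ⟨u, v⟩ huv
    rw [mem_edgeSet, fromFun_adj] at huv
    obtain ⟨hne, rfl | rfl⟩ := huv
    · refine ⟨u, fun hu => hne ?_, rfl⟩
      rw [mem_singleton_iff.mp hu, hr]
    · refine ⟨v, fun hv => hne ?_, Sym2.eq_swap⟩
      rw [mem_singleton_iff.mp hv, hr]
  calc (fromFun f).edgeSet.ncard
    _ ≤ ((fun v => s(v, f v)) '' {r}ᶜ).ncard := ncard_le_ncard hsub (toFinite _)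
    _ ≤ ({r}ᶜ : Set V).ncard := ncard_image_le (toFinite _)
    _ = Nat.card V - 1 := by rw [ncard_compl, ncard_singleton]

theorem isTree_fromFun (hf : periodicPts f = {r}) : (fromFun f).IsTree := by
  have hconn := connected_fromFun hf
  have hle := ncard_edgeSet_fromFun_le (apply_eq_of_periodicPts_eq_singleton hf)
  have hge := hconn.card_vert_le_card_edgeSet_add_one
  have hpos : 0 < Nat.card V := Nat.card_pos_iff.mpr ⟨⟨r⟩, inferInstance⟩
  rw [Nat.card_coe_set_eq] at hge
  refine isTree_iff_connected_and_card.mpr ⟨hconn, ?_⟩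
  rw [Nat.card_coe_set_eq]
  omega

/- If `f v ≠ g v`, the edge `{v, g v}` of the common graph must come from `f (g v) = v`; so `g`
maps `{f ≠ g}` into itself, although every `g`-orbit ends at the root, where `f` and `g` agree. -/
theorem eq_of_fromFun_eq (hf : periodicPts f = {r}) (hg : periodicPts g = {r})
    (hfg : fromFun f = fromFun g) : f = g := by
  by_contra hne
  obtain ⟨v, hv⟩ := not_forall.mp (mt funext hne)
  set D := {v | f v ≠ g v}
  have hr : r ∉ D := by
    simp [D, apply_eq_of_periodicPts_eq_singleton hf, apply_eq_of_periodicPts_eq_singleton hg]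
  have hne_r {u : V} (hu : u ∈ D) : u ≠ r := fun h => hr (h ▸ hu)
  have hroot {u : V} (hu : u ∈ periodicPts g) : u = r := by rwa [hg] at hu
  have hmaps : MapsTo g D D := by
    intro u hu
    have hgu : g u ≠ u := fun h =>
      hne_r hu (hroot <| mk_mem_periodicPts one_pos (by simpa [IsPeriodicPt, IsFixedPt] using h))
    have hadj : (fromFun f).Adj u (g u) := hfg ▸ fromFun_adj.mpr ⟨hgu.symm, Or.inl rfl⟩
    have hfgu : f (g u) = u := (fromFun_adj.mp hadj).2.resolve_left hu
    intro hggu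
    have : IsPeriodicPt g 2 u := by
      simp only [IsPeriodicPt, IsFixedPt, iterate_succ_apply', iterate_zero_apply]
      rw [← hggu, hfgu]
    exact hne_r hu (hroot <| mk_mem_periodicPts two_pos this)
  obtain ⟨k, hk⟩ := exists_iterate_mem_periodicPts g v
  rw [hg, mem_singleton_iff] at hk
  exact hr (hk ▸ hmaps.iterate k hv)

theorem IsTree.exists_fromFun_eq {G : SimpleGraph V} (hG : G.IsTree) (r : V) :
    ∃ f, periodicPts f = {r} ∧ fromFun f = G := by
  choose! parent hadj hlt using fun v (hv : v ≠ r) => hG.connected.exists_adj_dist_lt hv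
  classical
  let f := update parent r r
  have hfr : f r = r := update_self r r parent
  have hf (v : V) (hv : v ≠ r) : f v = parent v := update_of_ne hv r parent
  have hper : periodicPts f = {r} := by
    refine subset_antisymm (periodicPts_subset_singleton_of_lt (G.dist · r) hfr ?_) ?_
    · intro v hv
      simpa [hf v hv] using hlt v hv
    · exact singleton_subset_iff.mpr (mk_mem_periodicPts one_pos hfr)
  have hle : fromFun f ≤ G := by
    intro u v huv
    obtain ⟨hne, rfl | rfl⟩ := fromFun_adj.mp huv
    · have hu : u ≠ r := fun h => hne (by rw [h, hfr])
      exact hf u hu ▸ hadj u hu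
    · have hv : v ≠ r := fun h => hne (by rw [h, hfr])
      exact (hf v hv ▸ hadj v hv).symm
  exact ⟨f, hper, le_antisymm hle
    ((isTree_iff_minimal_connected.mp hG).2 (connected_fromFun hper) hle)⟩

theorem card_isTree_eq_card_periodicPts_eq_singleton (r : V) :
    Nat.card {G : SimpleGraph V // G.IsTree} = Nat.card {f : V → V // periodicPts f = {r}} :=
  Nat.card_congr (Equiv.ofBijective (fun f => ⟨fromFun f.1, isTree_fromFun f.2⟩)
    ⟨fun f g h => Subtype.ext (eq_of_fromFun_eq f.2 g.2 (congrArg Subtype.val h)),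
     fun G => let ⟨f, hf, hfG⟩ := G.2.exists_fromFun_eq r; ⟨⟨f, hf⟩, Subtype.ext hfG⟩⟩).symm

end SimpleGraph

namespace Function

open Classical

section Forest

variable {V : Type*} {S : Set V} {g h : V → V}

/-- `h` sends every vertex outside `S` to its parent in a forest whose roots are the points
of `S`. -/
def IsRootedForest (S : Set V) (h : V → V) : Prop :=
  periodicPts h = S ∧ ∀ v ∈ S, h v = v

noncomputable def glue (S : Set V) (τ : S → S) (h : V → V) : V → V :=
  fun v => if hv : v ∈ S then τ ⟨v, hv⟩ else h v

section Glue

variable {τ : S → S}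

theorem glue_of_mem {v : V} (hv : v ∈ S) : glue S τ h v = τ ⟨v, hv⟩ := dif_pos hv

theorem glue_of_notMem {v : V} (hv : v ∉ S) : glue S τ h v = h v := dif_neg hv

theorem semiconj_glue : Semiconj Subtype.val τ (glue S τ h) :=
  fun v => (glue_of_mem v.2).symm

theorem mapsTo_glue : MapsTo (glue S τ h) S S :=
  fun v hv => glue_of_mem (τ := τ) (h := h) hv ▸ (τ ⟨v, hv⟩).2

theorem periodicPts_glue (hh : IsRootedForest S h) :
    periodicPts (glue S τ h) = Subtype.val '' periodicPts τ := by
  refine subset_antisymm (fun v hv => ?_)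
    (mapsTo_iff_image_subset.mp semiconj_glue.mapsTo_periodicPts)
  by_cases hvS : v ∈ S
  · obtain ⟨n, hn, hper⟩ := mem_periodicPts.mp hv
    refine ⟨⟨v, hvS⟩, mk_mem_periodicPts hn (Subtype.ext ?_), rfl⟩
    exact ((semiconj_glue.iterate_right n) ⟨v, hvS⟩).trans hper
  · have := mem_periodicPts_of_eqOn_compl mapsTo_glue (fun _ hw => glue_of_notMem hw) hv hvS
    exact absurd (hh.1 ▸ this) hvS

end Glue

theorem isRootedForest_piecewise (hg : periodicPts g ⊆ S) :
    IsRootedForest S (S.piecewise id g) := by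
  have hfix : ∀ v ∈ S, S.piecewise id g v = v := fun v hv => piecewise_eq_of_mem S id g hv
  refine ⟨subset_antisymm (fun v hv => ?_) (fun v hv => mk_mem_periodicPts one_pos (hfix v hv)),
    hfix⟩
  by_contra hvS
  exact hvS <| hg <| mem_periodicPts_of_eqOn_compl (fun w hw => (hfix w hw).symm ▸ hw)
    (fun w hw => piecewise_eq_of_notMem S id g hw) hv hvS

theorem IsRootedForest.nonempty [Finite V] [Nonempty V] (hh : IsRootedForest S h) :
    S.Nonempty := by
  obtain ⟨k, hk⟩ := exists_iterate_mem_periodicPts h (Classical.arbitrary V)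
  exact ⟨_, hh.1 ▸ hk⟩

noncomputable def periodicPtsFiberEquiv [Finite V] (S : Set V) :
    {g : V → V // periodicPts g = S} ≃ Equiv.Perm S × {h : V → V // IsRootedForest S h} where
  toFun g := (Set.BijOn.equiv g.1 (by simpa only [g.2] using bijOn_periodicPts (f := g.1)),
    ⟨S.piecewise id g, isRootedForest_piecewise g.2.subset⟩)
  invFun p := ⟨glue S p.1 p.2.1, by
    rw [periodicPts_glue p.2.2, injective_iff_periodicPts_eq_univ.mp p.1.injective,
      image_univ, Subtype.range_coe]⟩
  left_inv g := by
    ext v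
    by_cases hv : v ∈ S
    · simp [glue_of_mem hv, Set.BijOn.equiv]
    · simp [glue_of_notMem hv, hv]
  right_inv p := by
    ext v
    · simp [glue_of_mem v.2, Set.BijOn.equiv]
    · by_cases hv : v ∈ S
      · simp [hv, p.2.2.2 v hv]
      · simp [glue_of_notMem hv, hv]

end Forest

section Depth

variable {V : Type*} [Finite V] {f : V → V} {a b : V}

noncomputable def depth (f : V → V) (b a : V) : ℕ := sInf {k | f^[k] a = b}

theorem iterate_depth (hf : periodicPts f = {b}) (a : V) : f^[depth f b a] a = b := by
  obtain ⟨k, hk⟩ := exists_iterate_mem_periodicPts f a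
  rw [hf, mem_singleton_iff] at hk
  exact Nat.sInf_mem (s := {k | f^[k] a = b}) ⟨k, hk⟩

theorem iterate_eq_of_depth_le (hf : periodicPts f = {b}) {m : ℕ} (hm : depth f b a ≤ m) :
    f^[m] a = b := by
  rw [← Nat.sub_add_cancel hm, iterate_add_apply, iterate_depth hf,
    iterate_fixed (apply_eq_of_periodicPts_eq_singleton hf)]

theorem iterate_min_depth (hf : periodicPts f = {b}) (m : ℕ) :
    f^[min m (depth f b a)] a = f^[m] a := by
  rcases le_total m (depth f b a) with h | h
  · rw [min_eq_left h]
  · rw [min_eq_right h, iterate_depth hf, iterate_eq_of_depth_le hf h]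

theorem injOn_iterate_Iic_depth (hf : periodicPts f = {b}) :
    InjOn (f^[·] a) (Iic (depth f b a)) := by
  suffices ∀ i j, i < j → j ≤ depth f b a → f^[i] a ≠ f^[j] a by
    intro i hi j hj hij
    by_contra hne
    rcases Nat.lt_or_gt_of_ne hne with h | h
    · exact this i j h hj hij
    · exact this j i h hi hij.symm
  intro i j hij hj heq
  have : f^[i + (depth f b a - j)] a = b := by
    rw [add_comm, iterate_add_apply, heq, ← iterate_add_apply, Nat.sub_add_cancel hj,
      iterate_depth hf]
  exact Nat.notMem_of_lt_sInf (s := {k | f^[k] a = b})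
    (show i + (depth f b a - j) < depth f b a by omega) this

theorem range_iterate_eq_image_Iic_depth (hf : periodicPts f = {b}) :
    range (f^[·] a) = (f^[·] a) '' Iic (depth f b a) := by
  refine subset_antisymm ?_ (image_subset_range _ _)
  rintro _ ⟨m, rfl⟩
  exact ⟨_, mem_Iic.mpr (min_le_right _ _), iterate_min_depth hf m⟩

theorem card_range_iterate (hf : periodicPts f = {b}) :
    Nat.card (range (f^[·] a)) = depth f b a + 1 := by
  rw [Nat.card_coe_set_eq, range_iterate_eq_image_Iic_depth hf,
    (injOn_iterate_Iic_depth hf).ncard_image, ncard_eq_toFinset_card', toFinset_Iic,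
    Nat.card_Iic]

end Depth

section Path

variable {V : Type*} {S : Set V} {k : ℕ}

/-- The path `e 0 → e 1 → ⋯ → e (k - 1)`, ending in a fixed point. -/
def pathStep (e : Fin k ≃ S) : S → S := fun x => e ⟨min (e.symm x + 1) (k - 1), by omega⟩

theorem pathStep_apply (e : Fin k ≃ S) (i : Fin k) :
    pathStep e (e i) = e ⟨min (i + 1) (k - 1), by omega⟩ := by
  simp only [pathStep, Equiv.symm_apply_apply]

theorem pathStep_iterate (e : Fin k ≃ S) (i : Fin k) (m : ℕ) :
    (pathStep e)^[m] (e i) = e ⟨min (i + m) (k - 1), by omega⟩ := by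
  induction m with
  | zero => simp [min_eq_left (Nat.le_sub_one_of_lt i.2)]
  | succ m ih =>
    rw [iterate_succ_apply', ih, pathStep_apply]
    congr 2
    simp only
    omega

theorem periodicPts_pathStep (e : Fin k ≃ S) (hk : 0 < k) :
    periodicPts (pathStep e) = {e ⟨k - 1, by omega⟩} := by
  ext x
  obtain ⟨i, rfl⟩ := e.surjective x
  rw [mem_singleton_iff, e.apply_eq_iff_eq, Fin.ext_iff]
  constructor
  · intro hi
    obtain ⟨n, hn, hper⟩ := mem_periodicPts.mp hi
    have := congrArg Fin.val (e.injective ((pathStep_iterate e i n).symm.trans hper))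
    simp only at this ⊢
    omega
  · intro hi
    refine mk_mem_periodicPts one_pos ((pathStep_iterate e i 1).trans ?_)
    congr 2
    simp only at hi ⊢
    omega

theorem glue_pathStep_iterate (e : Fin k ≃ S) (h : V → V) (hk : 0 < k) (m : ℕ) :
    (glue S (pathStep e) h)^[m] (e ⟨0, hk⟩) = e ⟨min m (k - 1), by omega⟩ := by
  rw [← (semiconj_glue.iterate_right m).eq, pathStep_iterate]
  simp

theorem range_iterate_glue_pathStep (e : Fin k ≃ S) (h : V → V) (hk : 0 < k) :
    range ((glue S (pathStep e) h)^[·] (e ⟨0, hk⟩)) = S := by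
  refine subset_antisymm ?_ fun x hx => ?_
  · rintro _ ⟨m, rfl⟩
    simp only [glue_pathStep_iterate, Subtype.coe_prop]
  · obtain ⟨i, hi⟩ := e.surjective ⟨x, hx⟩
    refine ⟨i, ?_⟩
    simp only [glue_pathStep_iterate, min_eq_left (Nat.le_sub_one_of_lt i.2), hi]

end Path

section Vertebrate

variable {V : Type*} [Finite V] {S : Set V} {f : V → V} {a b : V}

theorem card_eq_depth_add_one (hf : periodicPts f = {b}) (hS : range (f^[·] a) = S) :
    Nat.card S = depth f b a + 1 :=
  hS ▸ card_range_iterate hf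

theorem mem_of_range_iterate_eq (hf : periodicPts f = {b}) (hS : range (f^[·] a) = S) :
    b ∈ S :=
  hS ▸ ⟨_, iterate_depth hf a⟩

noncomputable def iterateEquiv (hf : periodicPts f = {b}) (hS : range (f^[·] a) = S) :
    Fin (Nat.card S) ≃ S :=
  Equiv.ofBijective (fun i => ⟨f^[i] a, hS ▸ mem_range_self (i : ℕ)⟩) <| by
    refine (Nat.bijective_iff_injective_and_card _).mpr ⟨fun i j hij => ?_, Nat.card_fin _⟩
    have hd := card_eq_depth_add_one hf hS
    exact Fin.ext <| injOn_iterate_Iic_depth hf (mem_Iic.mpr (by omega))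
      (mem_Iic.mpr (by omega)) (congrArg Subtype.val hij)

theorem iterateEquiv_apply_min (hf : periodicPts f = {b}) (hS : range (f^[·] a) = S) (m : ℕ) :
    (iterateEquiv hf hS ⟨min m (Nat.card S - 1), by have := card_eq_depth_add_one hf hS; omega⟩
      : V) = f^[m] a := by
  simp only [iterateEquiv, Equiv.ofBijective_apply, card_eq_depth_add_one hf hS,
    Nat.add_sub_cancel]
  exact iterate_min_depth hf m

theorem glue_pathStep_iterateEquiv (hf : periodicPts f = {b}) (hS : range (f^[·] a) = S) :
    glue S (pathStep (iterateEquiv hf hS)) (S.piecewise id f) = f := by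
  ext v
  by_cases hv : v ∈ S
  · rw [glue_of_mem hv]
    obtain ⟨m, rfl⟩ := hS ▸ hv
    have hk := card_eq_depth_add_one hf hS
    have hv' : (⟨f^[m] a, hv⟩ : S) = iterateEquiv hf hS ⟨min m (Nat.card S - 1), by omega⟩ :=
      Subtype.ext (iterateEquiv_apply_min hf hS m).symm
    rw [hv', pathStep_apply, ← iterate_succ_apply' f, ← iterateEquiv_apply_min hf hS (m + 1)]
    congr 3
    simp only
    omega
  · simp [glue_of_notMem hv, hv]

/-- A vertebrate `(a, b, f)` is a tree `f` rooted at `b` with a marked vertex `a`; its spine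
`range (f^[·] a)` is the path from `a` to `b`. -/
noncomputable def vertebrateFiberEquiv [Nonempty V] (S : Set V) :
    {p : V × V × (V → V) // periodicPts p.2.2 = {p.2.1} ∧ range (p.2.2^[·] p.1) = S} ≃
      (Fin (Nat.card S) ≃ S) × {h : V → V // IsRootedForest S h} where
  toFun p := (iterateEquiv p.2.1 p.2.2, ⟨S.piecewise id p.1.2.2, isRootedForest_piecewise <| by
    rw [p.2.1, singleton_subset_iff]
    exact mem_of_range_iterate_eq p.2.1 p.2.2⟩)
  invFun q :=
    have hk : 0 < Nat.card S := Nat.card_pos_iff.mpr ⟨q.2.2.nonempty.to_subtype, inferInstance⟩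
    ⟨(q.1 ⟨0, hk⟩, q.1 ⟨Nat.card S - 1, by omega⟩, glue S (pathStep q.1) q.2.1), by
      rw [periodicPts_glue q.2.2, periodicPts_pathStep q.1 hk, image_singleton],
      range_iterate_glue_pathStep q.1 q.2.1 hk⟩
  left_inv := by
    rintro ⟨⟨a, b, f⟩, hf, hS⟩
    dsimp only at hf hS
    have hd := card_eq_depth_add_one hf hS
    refine Subtype.ext (Prod.ext ?_ (Prod.ext ?_ ?_))
    · simpa using iterateEquiv_apply_min hf hS 0
    · simpa [hd, iterate_depth hf] using iterateEquiv_apply_min hf hS (depth f b a)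
    · exact glue_pathStep_iterateEquiv hf hS
  right_inv := by
    rintro ⟨e, h, hh⟩
    refine Prod.ext (Equiv.ext fun i => Subtype.ext ?_) (Subtype.ext (funext fun v => ?_))
    · simp only [iterateEquiv, Equiv.ofBijective_apply]
      rw [glue_pathStep_iterate]
      exact congrArg _ (congrArg e (Fin.ext (min_eq_left (Nat.le_sub_one_of_lt i.2))))
    · by_cases hv : v ∈ S
      · simp [hv, hh.2 v hv]
      · simp [glue_of_notMem hv, hv]

noncomputable def funEquivVertebrates [Nonempty V] :
    (V → V) ≃ {p : V × V × (V → V) // periodicPts p.2.2 = {p.2.1}} :=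
  calc (V → V)
    _ ≃ Σ S : Set V, {g : V → V // periodicPts g = S} := (Equiv.sigmaFiberEquiv _).symm
    _ ≃ Σ S : Set V, Equiv.Perm S × {h : V → V // IsRootedForest S h} :=
      Equiv.sigmaCongrRight periodicPtsFiberEquiv
    _ ≃ Σ S : Set V, (Fin (Nat.card S) ≃ S) × {h : V → V // IsRootedForest S h} :=
      Equiv.sigmaCongrRight fun S =>
        ((Finite.equivFin S).symm.equivCongr (Equiv.refl S)).symm.prodCongr (Equiv.refl _)
    _ ≃ Σ S : Set V, {p : V × V × (V → V) //
          periodicPts p.2.2 = {p.2.1} ∧ range (p.2.2^[·] p.1) = S} :=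
      Equiv.sigmaCongrRight fun S => (vertebrateFiberEquiv S).symm
    _ ≃ Σ S : Set V, {q : {p : V × V × (V → V) // periodicPts p.2.2 = {p.2.1}} //
          range (q.1.2.2^[·] q.1.1) = S} :=
      Equiv.sigmaCongrRight fun _ => (Equiv.subtypeSubtypeEquivSubtypeInter _ _).symm
    _ ≃ {p : V × V × (V → V) // periodicPts p.2.2 = {p.2.1}} := Equiv.sigmaFiberEquiv _

end Vertebrate

end Function

open Function in
theorem SimpleGraph.card_fun_eq_mul_card_isTree (V : Type*) [Fintype V] [Nonempty V] :
    Nat.card V ^ Nat.card V =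
      Nat.card V * (Nat.card V * Nat.card {G : SimpleGraph V // G.IsTree}) :=
  calc Nat.card V ^ Nat.card V
    _ = Nat.card {p : V × V × (V → V) // periodicPts p.2.2 = {p.2.1}} :=
      Nat.card_fun.symm.trans (Nat.card_congr funEquivVertebrates)
    _ = ∑ _a : V, ∑ b : V, Nat.card {f : V → V // periodicPts f = {b}} :=
      (Nat.card_congr (Equiv.subtypeProdEquivSigmaSubtype
          fun (_ : V) (q : V × (V → V)) => periodicPts q.2 = {q.1})).trans <|
        Nat.card_sigma.trans <| Finset.sum_congr rfl fun _ _ =>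
          (Nat.card_congr (Equiv.subtypeProdEquivSigmaSubtype
            fun (b : V) (f : V → V) => periodicPts f = {b})).trans Nat.card_sigma
    _ = _ := by simp [← card_isTree_eq_card_periodicPts_eq_singleton]

/-- Cayley's formula: the number of trees on `n` labeled vertices is `n^(n-2)`
for every integer `n ≥ 2`. A tree on `{1,...,n}` is a connected acyclic
simple graph on these `n` labeled vertices. -/
theorem cayley_formula (n : ℕ) (hn : 2 ≤ n) :
    Nat.card {G : SimpleGraph (Fin n) // G.IsTree} = n ^ (n - 2) := by
  have : Nonempty (Fin n) := ⟨⟨0, by omega⟩⟩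
  have key := SimpleGraph.card_fun_eq_mul_card_isTree (Fin n)
  rw [Nat.card_fin, ← mul_assoc, ← sq, ← Nat.sub_add_cancel hn, pow_add, mul_comm,
    Nat.sub_add_cancel hn] at key
  exact (Nat.eq_of_mul_eq_mul_left (by positivity) key).symm
end

section
/- The Borel(1) probabilities sum to one: ∑_{k=1}^∞ e^{-k} k^{k-1} / k! = 1. -/
/-!
Let `a k = (k + 1) ^ k / (k + 1)!` and `S x = ∑ a k * x ^ k`; then `x * S x` is the tree
function `T x = ∑ n ^ (n - 1) * x ^ n / n!` and `S = exp ∘ T`. Abel's identity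
`∑ k, (n choose k) (k + 1) ^ (k - 1) (y - k) ^ (n - k) = (y + 1) ^ n`, taken at `y = n + 1`, is
the coefficient form of `S' = S * (x * S)'`, so `S x * exp (-(x * S x))` has derivative zero on
`|x| < e⁻¹` and equals its value `1` at `0`. Stirling's bound makes `∑ a k * e⁻ᵏ` converge
absolutely, so the identity persists at `x = e⁻¹`. There the Borel sum `t = e⁻¹ * S e⁻¹`
satisfies `t * exp (-t) = e⁻¹`, whose only solution is `t = 1`.
-/

open Finset Real
open scoped Nat

theorem sum_range_neg_one_pow_mul_choose_mul_add_one_pow (n : ℕ) :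
    ∑ k ∈ range (n + 2),
      (-1 : ℝ) ^ (n + 1 - k) * (n + 1).choose k * ((k : ℝ) + 1) ^ n = 0 := by
  have h := congr_fun (fwdDiff_iter_pow_eq_zero_of_lt (R := ℝ) (Nat.lt_succ_self n)) 1
  rw [fwdDiff_iter_eq_sum_shift, Pi.zero_apply] at h
  rw [← h]
  refine sum_congr rfl fun k _ => ?_
  simp [add_comm]

theorem abel_identity (n : ℕ) (y : ℝ) :
    ∑ k ∈ range (n + 1), (n.choose k : ℝ) * ((k + 1) ^ k / (k + 1)) * (y - k) ^ (n - k) =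
      (y + 1) ^ n := by
  induction n generalizing y with
  | zero => simp
  | succ n ih =>
    set f : ℝ → ℝ := fun y => ∑ k ∈ range (n + 2),
      ((n + 1).choose k : ℝ) * ((k + 1) ^ k / (k + 1)) * (y - k) ^ (n + 1 - k)
    have hf : ∀ y, HasDerivAt f ((n + 1) * (y + 1) ^ n) y := by
      intro y
      refine (HasDerivAt.fun_sum fun (k : ℕ) _ =>
        (((hasDerivAt_id' y).sub_const (k : ℝ)).fun_pow (n + 1 - k)).const_mul
          (((n + 1).choose k : ℝ) * ((k + 1) ^ k / (k + 1)))).congr_deriv ?_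
      rw [sum_range_succ, ← ih y, mul_sum]
      simp only [Nat.sub_self, Nat.cast_zero, zero_mul, mul_zero, add_zero]
      refine sum_congr rfl fun k hk => ?_
      have hkn : k ≤ n := Nat.lt_succ_iff.mp (mem_range.mp hk)
      have hchoose : ((n + 1).choose k : ℝ) * ((n + 1 - k : ℕ) : ℝ) = (n + 1) * n.choose k :=
        mod_cast (Nat.choose_mul_succ_eq n k).symm.trans (mul_comm _ _)
      rw [show n + 1 - k - 1 = n - k by omega]
      linear_combination ((k + 1) ^ k / (k + 1) * (y - k) ^ (n - k) : ℝ) * hchoose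
    have hg : ∀ y : ℝ, HasDerivAt (fun y => (y + 1) ^ (n + 1)) ((n + 1) * (y + 1) ^ n) y := by
      intro y
      simpa using ((hasDerivAt_id' y).add_const 1).fun_pow (n + 1)
    -- at `y = -1` the sum is an `(n + 1)`-st forward difference of `r ↦ r ^ n`
    have hf_neg_one : f (-1) = 0 := by
      rw [← sum_range_neg_one_pow_mul_choose_mul_add_one_pow n]
      refine sum_congr rfl fun k hk => ?_
      have hkn : k ≤ n + 1 := Nat.lt_succ_iff.mp (mem_range.mp hk)
      have hk1 : (k : ℝ) + 1 ≠ 0 := by positivity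
      rw [show (-1 : ℝ) - k = -1 * (k + 1) by ring, mul_pow]
      field_simp
      rw [mul_assoc, ← pow_add, show k + (n + 1 - k) = n + 1 by omega, pow_succ]
      ring
    have hconst := is_const_of_deriv_eq_zero (f := fun y => f y - (y + 1) ^ (n + 1))
      (fun y => ((hf y).sub (hg y)).differentiableAt)
      (fun y => ((hf y).sub (hg y)).deriv.trans (sub_self _)) y (-1)
    simp only [hf_neg_one] at hconst
    norm_num at hconst
    linarith

section PowerSeries

variable {a : ℕ → ℝ} {ρ : ℝ}

theorem summable_succ_mul_abs_mul_pow (hs : Summable fun n => |a n| * ρ ^ n) {r : ℝ}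
    (hr₀ : 0 ≤ r) (hr : r < ρ) : Summable fun n => (n + 1) * |a n| * r ^ n := by
  have hρ : 0 < ρ := hr₀.trans_lt hr
  have hq : ‖r / ρ‖ < 1 := by
    rw [norm_div, Real.norm_of_nonneg hr₀, Real.norm_of_nonneg hρ.le, div_lt_one hρ]; exact hr
  have hgeom : Summable fun n : ℕ => ((n : ℝ) + 1) * (r / ρ) ^ n := by
    simpa [add_mul] using (summable_pow_mul_geometric_of_norm_lt_one 1 hq).add
      (summable_geometric_of_norm_lt_one hq)
  refine (hgeom.mul_right (∑' n, |a n| * ρ ^ n)).of_nonneg_of_le (fun n => by positivity)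
    fun n => ?_
  have hle : |a n| * ρ ^ n ≤ ∑' n, |a n| * ρ ^ n :=
    hs.le_tsum n fun m _ => by have := hρ.le; positivity
  calc (n + 1) * |a n| * r ^ n = ((n : ℝ) + 1) * (r / ρ) ^ n * (|a n| * ρ ^ n) := by
        rw [div_pow]; field_simp
    _ ≤ _ := mul_le_mul_of_nonneg_left hle (by positivity)

theorem hasDerivAt_tsum_mul_pow_succ (hs : Summable fun n => |a n| * ρ ^ n) {x : ℝ}
    (hx : |x| < ρ) :
    HasDerivAt (fun y => ∑' n, a n * y ^ (n + 1)) (∑' n, (n + 1) * a n * x ^ n) x := by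
  obtain ⟨r, hxr, hrρ⟩ := exists_between hx
  have hr₀ : 0 < r := (abs_nonneg x).trans_lt hxr
  refine hasDerivAt_tsum_of_isPreconnected (g := fun n y => a n * y ^ (n + 1))
    (g' := fun n y => (n + 1) * a n * y ^ n)
    (summable_succ_mul_abs_mul_pow hs hr₀.le hrρ) isOpen_Ioo isPreconnected_Ioo
    (fun n y _ => ?_) (fun n y hy => ?_)
    (show (0 : ℝ) ∈ Set.Ioo (-r) r by constructor <;> linarith) (by simp) (abs_lt.mp hxr)
  · simpa [mul_comm, mul_left_comm, mul_assoc] using (hasDerivAt_pow (n + 1) y).const_mul (a n)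
  · rw [norm_mul, norm_mul, norm_pow, Real.norm_eq_abs, Real.norm_eq_abs, Real.norm_eq_abs,
      abs_of_nonneg (by positivity : (0 : ℝ) ≤ n + 1)]
    gcongr
    exact (abs_lt.mpr hy).le

theorem hasDerivAt_tsum_mul_pow (hs : Summable fun n => |a n| * ρ ^ n) {x : ℝ}
    (hx : |x| < ρ) :
    HasDerivAt (fun y => ∑' n, a n * y ^ n) (∑' n, (n + 1) * a (n + 1) * x ^ n) x := by
  have hρ : 0 < ρ := (abs_nonneg x).trans_lt hx
  have hs' : Summable fun n => |a (n + 1)| * ρ ^ n := by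
    refine ((summable_nat_add_iff 1).mpr hs |>.div_const ρ).congr fun n => ?_
    rw [pow_succ]; field_simp
  have hsplit :
      ∀ᶠ y in nhds x, ∑' n, a n * y ^ n = a 0 + ∑' n, a (n + 1) * y ^ (n + 1) := by
    filter_upwards [Metric.ball_mem_nhds x (sub_pos.mpr hx)] with y hy
    have hyρ : |y| ≤ ρ := by
      have := abs_sub_abs_le_abs_sub y x
      rw [Metric.mem_ball, Real.dist_eq] at hy
      linarith
    have hsy : Summable fun n => a n * y ^ n := hs.of_norm_bounded fun n => by
      rw [norm_mul, norm_pow, Real.norm_eq_abs, Real.norm_eq_abs]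
      gcongr
    simpa using hsy.tsum_eq_zero_add
  exact ((hasDerivAt_tsum_mul_pow_succ hs' hx).const_add (a 0)).congr_of_eventuallyEq hsplit

theorem continuousOn_tsum_mul_pow (hs : Summable fun n => |a n| * ρ ^ n) :
    ContinuousOn (fun y => ∑' n, a n * y ^ n) (Set.Icc (-ρ) ρ) :=
  continuousOn_tsum (fun n => (continuous_const.mul (continuous_pow n)).continuousOn) hs
    fun n y hy => by
      rw [norm_mul, norm_pow, Real.norm_eq_abs, Real.norm_eq_abs]
      gcongr
      exact abs_le.mpr hy

end PowerSeries

noncomputable def borelCoeff (k : ℕ) : ℝ := ((k : ℝ) + 1) ^ k / (k + 1)!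

theorem borelCoeff_zero : borelCoeff 0 = 1 := by simp [borelCoeff]

theorem borelCoeff_nonneg (k : ℕ) : 0 ≤ borelCoeff k := by unfold borelCoeff; positivity

theorem borelCoeff_mul_exp_neg_one_pow_le (k : ℕ) :
    borelCoeff k * exp (-1) ^ k ≤ exp 1 / (((k : ℝ) + 1) * √((k : ℝ) + 1)) := by
  have hstirling := Stirling.le_factorial_stirling (k + 1)
  push_cast at hstirling
  set m : ℝ := (k : ℝ) + 1
  have hm : 0 < m := by positivity
  have hsqrt : √m ≤ √(2 * π * m) := Real.sqrt_le_sqrt (by nlinarith [pi_gt_three])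
  have hpow : exp 1 * (m / exp 1) ^ (k + 1) = m ^ (k + 1) * exp (-1) ^ k := by
    rw [div_pow, Real.exp_neg, inv_pow, pow_succ (exp 1)]
    field_simp
  rw [borelCoeff, div_mul_eq_mul_div, div_le_div_iff₀ (by positivity) (by positivity)]
  calc m ^ k * exp (-1) ^ k * (m * √m) = √m * (exp 1 * (m / exp 1) ^ (k + 1)) := by
        rw [hpow]; ring
    _ ≤ √(2 * π * m) * (exp 1 * (m / exp 1) ^ (k + 1)) := by gcongr
    _ ≤ exp 1 * (k + 1)! := by
        rw [mul_left_comm]; exact mul_le_mul_of_nonneg_left hstirling (exp_pos 1).le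

theorem summable_abs_borelCoeff_mul_exp_neg_one_pow :
    Summable fun k => |borelCoeff k| * exp (-1) ^ k := by
  have hp : Summable fun k : ℕ => exp 1 * ((((k + 1 : ℕ) : ℝ)) ^ (3 / 2 : ℝ))⁻¹ :=
    ((summable_nat_add_iff 1).mpr (Real.summable_nat_rpow_inv.mpr (by norm_num))).mul_left _
  refine hp.of_nonneg_of_le (fun k => by positivity) fun k => ?_
  have hk : (0 : ℝ) < k + 1 := by positivity
  rw [abs_of_nonneg (borelCoeff_nonneg k), show (3 / 2 : ℝ) = 1 + 1 / 2 by norm_num,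
    Nat.cast_succ, Real.rpow_add hk, Real.rpow_one, ← Real.sqrt_eq_rpow, ← div_eq_mul_inv]
  exact borelCoeff_mul_exp_neg_one_pow_le k

theorem borelCoeff_convolution (n : ℕ) :
    ∑ p ∈ antidiagonal n, borelCoeff p.1 * ((p.2 + 1) * borelCoeff p.2) =
      (n + 1) * borelCoeff (n + 1) := by
  rw [Nat.sum_antidiagonal_eq_sum_range_succ_mk]
  have hterm : ∀ k ∈ range (n + 1),
      borelCoeff k * ((((n - k : ℕ) : ℝ) + 1) * borelCoeff (n - k)) =
        n.choose k * ((k + 1) ^ k / (k + 1)) * ((n + 1 : ℝ) - k) ^ (n - k) / n ! := by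
    intro k hk
    have hkn : k ≤ n := Nat.lt_succ_iff.mp (mem_range.mp hk)
    rw [Nat.cast_choose ℝ hkn, show (n + 1 : ℝ) - k = ((n - k : ℕ) : ℝ) + 1 by
      rw [Nat.cast_sub hkn]; ring]
    simp only [borelCoeff, Nat.factorial_succ, Nat.cast_mul, Nat.cast_succ]
    field_simp
  rw [sum_congr rfl hterm, ← sum_div, abel_identity]
  simp only [borelCoeff, Nat.factorial_succ, Nat.cast_mul, Nat.cast_succ]
  field_simp
  ring

noncomputable def borelSeries (x : ℝ) : ℝ := ∑' k, borelCoeff k * x ^ k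

section BorelSeries

variable {x : ℝ}

theorem hasDerivAt_borelSeries (hx : |x| < exp (-1)) :
    HasDerivAt borelSeries (∑' n, (n + 1) * borelCoeff (n + 1) * x ^ n) x :=
  hasDerivAt_tsum_mul_pow summable_abs_borelCoeff_mul_exp_neg_one_pow hx

theorem hasDerivAt_mul_borelSeries (hx : |x| < exp (-1)) :
    HasDerivAt (fun y => y * borelSeries y) (∑' n, (n + 1) * borelCoeff n * x ^ n) x := by
  have hshift : (fun y => y * borelSeries y) = fun y => ∑' n, borelCoeff n * y ^ (n + 1) := by
    ext y
    rw [borelSeries, ← tsum_mul_left]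
    exact tsum_congr fun n => by ring
  rw [hshift]
  exact hasDerivAt_tsum_mul_pow_succ summable_abs_borelCoeff_mul_exp_neg_one_pow hx

theorem tsum_succ_mul_borelCoeff_succ_mul_pow (hx : |x| < exp (-1)) :
    ∑' n, (n + 1) * borelCoeff (n + 1) * x ^ n =
      borelSeries x * ∑' n, (n + 1) * borelCoeff n * x ^ n := by
  have hs := summable_abs_borelCoeff_mul_exp_neg_one_pow
  have hS : Summable fun n => ‖borelCoeff n * x ^ n‖ := by
    refine hs.of_nonneg_of_le (fun n => norm_nonneg _) fun n => ?_
    rw [norm_mul, norm_pow, Real.norm_eq_abs, Real.norm_eq_abs]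
    gcongr
  have hU : Summable fun n => ‖(n + 1) * borelCoeff n * x ^ n‖ := by
    refine (summable_succ_mul_abs_mul_pow hs (abs_nonneg x) hx).congr fun n => ?_
    rw [norm_mul, norm_mul, norm_pow, Real.norm_eq_abs, Real.norm_eq_abs, Real.norm_eq_abs,
      abs_of_nonneg (by positivity : (0 : ℝ) ≤ n + 1)]
  rw [borelSeries, tsum_mul_tsum_eq_tsum_sum_antidiagonal_of_summable_norm hS hU]
  refine tsum_congr fun n => ?_
  rw [← borelCoeff_convolution, sum_mul]
  refine sum_congr rfl fun p hp => ?_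
  rw [← mem_antidiagonal.mp hp, pow_add]
  ring

theorem hasDerivAt_borelSeries_mul_exp_neg (hx : |x| < exp (-1)) :
    HasDerivAt (fun y => borelSeries y * exp (-(y * borelSeries y))) 0 x := by
  refine ((hasDerivAt_borelSeries hx).mul (hasDerivAt_mul_borelSeries hx).neg.exp).congr_deriv ?_
  rw [tsum_succ_mul_borelCoeff_succ_mul_pow hx]
  ring

end BorelSeries

theorem borelSeries_zero : borelSeries 0 = 1 := by
  rw [borelSeries, tsum_eq_single 0 fun n hn => by simp [hn], pow_zero, mul_one, borelCoeff_zero]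

theorem borelSeries_mul_exp_neg_eq_one {x : ℝ} (hx : x ∈ Set.Icc (-exp (-1)) (exp (-1))) :
    borelSeries x * exp (-(x * borelSeries x)) = 1 := by
  set f : ℝ → ℝ := fun y => borelSeries y * exp (-(y * borelSeries y))
  have hzero_mem : (0 : ℝ) ∈ Set.Ioo (-exp (-1)) (exp (-1)) := by
    constructor <;> linarith [exp_pos (-1)]
  have hderiv : ∀ z ∈ Set.Ioo (-exp (-1)) (exp (-1)), HasDerivAt f 0 z :=
    fun z hz => hasDerivAt_borelSeries_mul_exp_neg (abs_lt.mpr hz)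
  have hopen : Set.EqOn f 1 (Set.Ioo (-exp (-1)) (exp (-1))) := fun y hy => by
    have := isOpen_Ioo.is_const_of_deriv_eq_zero isPreconnected_Ioo
      (fun z hz => (hderiv z hz).differentiableAt.differentiableWithinAt)
      (fun z hz => (hderiv z hz).deriv) hy hzero_mem
    simpa [f, borelSeries_zero] using this
  have hcont : ContinuousOn f (Set.Icc (-exp (-1)) (exp (-1))) := by
    have hS := continuousOn_tsum_mul_pow summable_abs_borelCoeff_mul_exp_neg_one_pow
    exact hS.mul (continuousOn_id.mul hS).neg.rexp
  refine hopen.of_subset_closure hcont continuousOn_const Set.Ioo_subset_Icc_self ?_ hx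
  rw [closure_Ioo (by linarith [exp_pos (-1)])]

theorem eq_one_of_mul_exp_neg_eq {t : ℝ} (h : t * exp (-t) = exp (-1)) : t = 1 := by
  by_contra hne
  have hlt : t < exp (t - 1) := by linarith [add_one_lt_exp (sub_ne_zero.mpr hne)]
  have := mul_lt_mul_of_pos_right hlt (exp_pos (-t))
  rw [← exp_add, show t - 1 + -t = -1 by ring] at this
  linarith

/-- The Borel(1) probabilities sum to one: `∑_{k=1}^∞ e^{-k} k^{k-1} / k! = 1`. -/
theorem borel_one_pmf_sums_to_one :
    ∑' k : ℕ, Real.exp (-((k : ℝ) + 1)) * ((k : ℝ) + 1) ^ k / Nat.factorial (k + 1) = 1 := by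
  have hsum : ∑' k : ℕ, exp (-((k : ℝ) + 1)) * ((k : ℝ) + 1) ^ k / (k + 1)! =
      exp (-1) * borelSeries (exp (-1)) := by
    rw [borelSeries, ← tsum_mul_left]
    refine tsum_congr fun k => ?_
    rw [borelCoeff, ← exp_nat_mul, show -((k : ℝ) + 1) = -1 + k * -1 by ring, exp_add]
    ring
  have hS := borelSeries_mul_exp_neg_eq_one
    (show exp (-1) ∈ Set.Icc (-exp (-1)) (exp (-1)) by constructor <;> linarith [exp_pos (-1)])
  rw [hsum]
  apply eq_one_of_mul_exp_neg_eq
  rw [mul_assoc, hS, mul_one]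
end

section
/- The function x ↦ (2π x (1-x)³)^{-1/2} exp(-x/(2(1-x))) is a probability density on (0,1); i.e. ∫_0^1 (2π x (1-x)³)^{-1/2} exp(-x/(2(1-x))) dx = 1. -/
/-!
Substituting `x = u² / (1 + u²)`, a bijection from `(0, ∞)` onto `(0, 1)` with
`dx = 2u / (1 + u²)² du`, one has `1 - x = 1 / (1 + u²)`, so `x / (2(1 - x)) = u² / 2` and
`√(2π x (1 - x)³) = √(2π) u / (1 + u²)²`. The integral becomes
`(2 / √(2π)) ∫₀^∞ exp(-u²/2) du`, twice a half-Gaussian integral.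
-/

open Real MeasureTheory Set

namespace Fireproof

noncomputable def subst (u : ℝ) : ℝ := u ^ 2 / (1 + u ^ 2)

lemma one_sub_subst (u : ℝ) : 1 - subst u = 1 / (1 + u ^ 2) := by
  have : 1 + u ^ 2 ≠ 0 := by positivity
  unfold subst
  field_simp
  ring

lemma hasDerivAt_subst (u : ℝ) : HasDerivAt subst (2 * u / (1 + u ^ 2) ^ 2) u := by
  have h : 1 + u ^ 2 ≠ 0 := by positivity
  refine HasDerivAt.congr_deriv
    ((hasDerivAt_pow 2 u).div ((hasDerivAt_const u 1).add (hasDerivAt_pow 2 u)) h) ?_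
  field_simp
  ring

lemma strictMonoOn_subst : StrictMonoOn subst (Ici 0) := by
  intro u hu v _ huv
  have hu : (0 : ℝ) ≤ u := hu
  unfold subst
  rw [div_lt_div_iff₀ (by positivity) (by positivity)]
  nlinarith

lemma image_subst_Ioi : subst '' Ioi 0 = Ioo 0 1 := by
  ext x
  constructor
  · rintro ⟨u, hu, rfl⟩
    have hu : (0 : ℝ) < u := hu
    refine ⟨by unfold subst; positivity, ?_⟩
    have := one_sub_subst u
    have : (0 : ℝ) < 1 / (1 + u ^ 2) := by positivity
    linarith
  · rintro ⟨hx0, hx1⟩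
    have hx : 0 < x / (1 - x) := div_pos hx0 (by linarith)
    refine ⟨√(x / (1 - x)), sqrt_pos.mpr hx, ?_⟩
    have : 1 - x ≠ 0 := by linarith
    unfold subst
    rw [sq_sqrt hx.le]
    field_simp
    ring

lemma jacobian_mul_density_subst {u : ℝ} (hu : 0 < u) :
    2 * u / (1 + u ^ 2) ^ 2 *
      (1 / √(2 * π * subst u * (1 - subst u) ^ 3) * exp (-subst u / (2 * (1 - subst u))))
      = 2 / √(2 * π) * exp (-(1 / 2) * u ^ 2) := by
  have h1 : 1 + u ^ 2 ≠ 0 := by positivity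
  have h2π : √(2 * π) ≠ 0 := by positivity
  have hsqrt : √(2 * π * subst u * (1 - subst u) ^ 3) = √(2 * π) * u / (1 + u ^ 2) ^ 2 := by
    rw [← sqrt_sq (by positivity : 0 ≤ √(2 * π) * u / (1 + u ^ 2) ^ 2), div_pow, mul_pow,
      sq_sqrt (by positivity), one_sub_subst, subst]
    field_simp
  have hexp : -subst u / (2 * (1 - subst u)) = -(1 / 2) * u ^ 2 := by
    rw [one_sub_subst, subst]
    field_simp
  rw [hsqrt, hexp]
  field_simp

end Fireproof

open Fireproof in
/-- The function `x ↦ (2π x (1-x)³)^{-1/2} exp(-x/(2(1-x)))` is a probability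
density on `(0,1)`. -/
theorem fireproof_density_integral_eq_one :
    ∫ x in Set.Ioo (0 : ℝ) 1,
      (1 / Real.sqrt (2 * π * x * (1 - x) ^ 3)) * Real.exp (-x / (2 * (1 - x))) = 1 := by
  rw [← image_subst_Ioi, integral_image_eq_integral_abs_deriv_smul measurableSet_Ioi
    (fun u _ => (hasDerivAt_subst u).hasDerivWithinAt)
    (strictMonoOn_subst.injOn.mono Ioi_subset_Ici_self)]
  have hintegrand : EqOn
      (fun u => |2 * u / (1 + u ^ 2) ^ 2| • (1 / √(2 * π * subst u * (1 - subst u) ^ 3) *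
        exp (-subst u / (2 * (1 - subst u)))))
      (fun u => 2 / √(2 * π) * exp (-(1 / 2) * u ^ 2)) (Ioi 0) := fun u (hu : 0 < u) => by
    dsimp only
    rw [smul_eq_mul, abs_of_pos (by positivity), jacobian_mul_density_subst hu]
  rw [setIntegral_congr_fun measurableSet_Ioi hintegrand, integral_const_mul,
    integral_gaussian_Ioi, div_div_eq_mul_div, mul_comm π 2, div_one]
  have : √(2 * π) ≠ 0 := by positivity
  field_simp
end

section
/- For every a > 0, the function x ↦ a (2π x (1-x)³)^{-1/2} exp(-a² x/(2(1-x))) is a probability density on (0,1). -/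
/-!
The substitution `x = s² / (s² + a²)` maps `(0, ∞)` bijectively onto `(0, 1)`, and it transports
the given density to the half-normal density `2 / √(2π) · exp (-s² / 2)`, whose integral over
`(0, ∞)` is `1` by the Gaussian integral.
-/

open Real Set MeasureTheory

section Substitution

variable {a : ℝ}

lemma hasDerivAt_sq_div_sq_add_sq (ha : a ≠ 0) (s : ℝ) :
    HasDerivAt (fun s => s ^ 2 / (s ^ 2 + a ^ 2)) (2 * s * a ^ 2 / (s ^ 2 + a ^ 2) ^ 2) s := by
  have hsq : HasDerivAt (fun s : ℝ => s ^ 2) (2 * s) s := by simpa using hasDerivAt_pow 2 s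
  exact (hsq.div (hsq.add_const (a ^ 2)) (by positivity)).congr_deriv (by ring)

lemma injOn_sq_div_sq_add_sq (ha : a ≠ 0) :
    InjOn (fun s => s ^ 2 / (s ^ 2 + a ^ 2)) (Ioi 0) := by
  intro s hs t ht hst
  rw [div_eq_div_iff (by positivity) (by positivity)] at hst
  have hsq : s ^ 2 = t ^ 2 :=
    mul_right_cancel₀ (pow_ne_zero 2 ha) (by linear_combination hst)
  exact (pow_left_inj₀ (le_of_lt hs) (le_of_lt ht) two_ne_zero).1 hsq

lemma image_sq_div_sq_add_sq_Ioi (ha : a ≠ 0) :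
    (fun s => s ^ 2 / (s ^ 2 + a ^ 2)) '' Ioi 0 = Ioo 0 1 := by
  ext y
  constructor
  · rintro ⟨s, hs : 0 < s, rfl⟩
    exact ⟨by positivity, (div_lt_one (by positivity)).2 (lt_add_of_pos_right _ (by positivity))⟩
  · rintro ⟨hy0, hy1⟩
    have hq : 0 < y / (1 - y) := div_pos hy0 (sub_pos.2 hy1)
    refine ⟨|a| * √(y / (1 - y)), mul_pos (abs_pos.2 ha) (sqrt_pos.2 hq), ?_⟩
    have hy1' : 1 - y ≠ 0 := (sub_pos.2 hy1).ne'
    simp only [mul_pow, sq_abs, sq_sqrt hq.le]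
    field_simp
    ring

lemma integral_Ioo_zero_one_eq_integral_Ioi_sq_div_sq_add_sq {E : Type*} [NormedAddCommGroup E]
    [NormedSpace ℝ E] (ha : a ≠ 0) (g : ℝ → E) :
    ∫ x in Ioo 0 1, g x =
      ∫ s in Ioi 0, (2 * s * a ^ 2 / (s ^ 2 + a ^ 2) ^ 2) • g (s ^ 2 / (s ^ 2 + a ^ 2)) := by
  rw [← image_sq_div_sq_add_sq_Ioi ha, integral_image_eq_integral_abs_deriv_smul measurableSet_Ioi
    (fun s _ => (hasDerivAt_sq_div_sq_add_sq ha s).hasDerivWithinAt) (injOn_sq_div_sq_add_sq ha)]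
  refine setIntegral_congr_fun measurableSet_Ioi fun s (hs : 0 < s) => ?_
  rw [abs_of_pos (by positivity)]

end Substitution

lemma jacobian_mul_density_eq_half_normal {a s : ℝ} (ha : 0 < a) (hs : 0 < s) :
    2 * s * a ^ 2 / (s ^ 2 + a ^ 2) ^ 2 *
        (a * (1 / √(2 * π * (s ^ 2 / (s ^ 2 + a ^ 2)) * (1 - s ^ 2 / (s ^ 2 + a ^ 2)) ^ 3)) *
          exp (-(a ^ 2 * (s ^ 2 / (s ^ 2 + a ^ 2))) / (2 * (1 - s ^ 2 / (s ^ 2 + a ^ 2))))) =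
      2 / √(2 * π) * exp (-(1 / 2) * s ^ 2) := by
  have hc : 0 < s ^ 2 + a ^ 2 := by positivity
  have hx : 1 - s ^ 2 / (s ^ 2 + a ^ 2) = a ^ 2 / (s ^ 2 + a ^ 2) := by field_simp; ring
  have hsqrt : √(2 * π * (s ^ 2 / (s ^ 2 + a ^ 2)) * (a ^ 2 / (s ^ 2 + a ^ 2)) ^ 3) =
      √(2 * π) * (s * a ^ 3 / (s ^ 2 + a ^ 2) ^ 2) := by
    rw [← sqrt_sq (by positivity : 0 ≤ s * a ^ 3 / (s ^ 2 + a ^ 2) ^ 2), ← sqrt_mul (by positivity)]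
    congr 1
    field_simp
  have hexp : -(a ^ 2 * (s ^ 2 / (s ^ 2 + a ^ 2))) / (2 * (a ^ 2 / (s ^ 2 + a ^ 2))) =
      -(1 / 2) * s ^ 2 := by
    field_simp
  rw [hx, hsqrt, hexp]
  field_simp

lemma integral_half_normal_density :
    ∫ s in Ioi 0, 2 / √(2 * π) * exp (-(1 / 2) * s ^ 2) = 1 := by
  rw [integral_const_mul, integral_gaussian_Ioi]
  field_simp

/-- For every `a > 0`, the function
`x ↦ a (2π x (1-x)³)^{-1/2} exp(-a² x/(2(1-x)))` is a probability density on `(0,1)`. -/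
theorem fireproof_density_general_integral_eq_one (a : ℝ) (ha : 0 < a) :
    ∫ x in Set.Ioo (0 : ℝ) 1,
      a * (1 / Real.sqrt (2 * π * x * (1 - x) ^ 3)) * Real.exp (-(a ^ 2 * x) / (2 * (1 - x)))
      = 1 := by
  rw [integral_Ioo_zero_one_eq_integral_Ioi_sq_div_sq_add_sq ha.ne']
  simp only [smul_eq_mul]
  rw [setIntegral_congr_fun measurableSet_Ioi fun s hs => jacobian_mul_density_eq_half_normal ha hs]
  exact integral_half_normal_density
end

section
/- Let λ_n be a random variable with P(λ_n = k) = (k+1)(n-1)! / (n^{k+1}(n-k-1)!) for k = 0, 1, ..., n-1. Then these probabilities sum to 1, and λ_n/√n converges in distribution to a Rayleigh random variable with density s e^{-s²/2} as n → ∞. -/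
/-!
The tail `P(λ_n ≥ k) = (n-1)(n-2)⋯(n-k) / n^k = ∏_{i<k} (1 - (i+1)/n)` makes the point masses
telescope, `P(λ_n = k) = P(λ_n ≥ k) - P(λ_n ≥ k+1)`, and the tail vanishes at `k = n`.
Since `-x - x² ≤ log (1 - x) ≤ -x` for `0 ≤ x ≤ 1/2`, the tail is squeezed between
`exp (-k(k+1)/2n - k³/n²)` and `exp (-k(k+1)/2n)`, and at `k ≈ s√n` both tend to `exp (-s²/2)`.
-/

open Real Filter Finset Topology

noncomputable def spineProb (n k : ℕ) : ℝ :=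
  ((k : ℝ) + 1) * Nat.factorial (n - 1) / ((n : ℝ) ^ (k + 1) * Nat.factorial (n - k - 1))

/-- `P(λ_n ≥ k)`. -/
noncomputable def spineTail (n k : ℕ) : ℝ :=
  ((n - 1).descFactorial k : ℝ) / (n : ℝ) ^ k

section Spine

variable {n k : ℕ}

lemma spineTail_zero (n : ℕ) : spineTail n 0 = 1 := by
  simp [spineTail]

lemma spineTail_succ (hk : k < n) :
    spineTail n (k + 1) = spineTail n k * (1 - ((k : ℝ) + 1) / n) := by
  have hn : (n : ℝ) ≠ 0 := Nat.cast_ne_zero.2 (by omega)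
  rw [spineTail, spineTail, Nat.descFactorial_succ, Nat.cast_mul,
    Nat.cast_sub (by omega), Nat.cast_sub (by omega)]
  field_simp
  ring

lemma spineProb_eq_spineTail_sub (hk : k < n) :
    spineProb n k = spineTail n k - spineTail n (k + 1) := by
  have hfac : (Nat.factorial (n - 1) : ℝ) =
      Nat.factorial (n - k - 1) * (n - 1).descFactorial k := by
    rw [Nat.sub_right_comm]
    exact_mod_cast (Nat.factorial_mul_descFactorial (by omega)).symm
  have hn : (n : ℝ) ≠ 0 := Nat.cast_ne_zero.2 (by omega)
  rw [spineTail_succ hk, spineProb, spineTail, hfac]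
  field_simp
  ring

lemma sum_range_spineProb {M : ℕ} (hM : M ≤ n) :
    ∑ k ∈ range M, spineProb n k = 1 - spineTail n M := by
  rw [← spineTail_zero n, ← sum_range_sub']
  exact sum_congr rfl fun k hk => spineProb_eq_spineTail_sub (by grind)

lemma spineTail_self (hn : 0 < n) : spineTail n n = 0 := by
  simp [spineTail, Nat.descFactorial_eq_zero_iff_lt.2 (Nat.sub_lt hn one_pos)]

lemma sum_range_spineProb_self (hn : 0 < n) : ∑ k ∈ range n, spineProb n k = 1 := by
  rw [sum_range_spineProb le_rfl, spineTail_self hn, sub_zero]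

lemma spineTail_eq_prod {M : ℕ} (hM : M ≤ n) :
    spineTail n M = ∏ i ∈ range M, (1 - ((i : ℝ) + 1) / n) := by
  induction M with
  | zero => simp [spineTail_zero]
  | succ M ih => rw [spineTail_succ hM, ih (by omega), prod_range_succ]

end Spine

lemma exp_neg_add_sq_le_one_sub {x : ℝ} (h0 : 0 ≤ x) (h1 : x ≤ 1 / 2) :
    exp (-(x + x ^ 2)) ≤ 1 - x := by
  have hexp := quadratic_le_exp_of_nonneg (by positivity : 0 ≤ x + x ^ 2)
  rw [exp_neg, inv_le_iff_one_le_mul₀ (exp_pos _)]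
  -- `(1 + y + y²/2)(1 - x) = 1 + x²(1 - x - x² - x³)/2` for `y = x + x²`
  nlinarith [mul_le_mul_of_nonneg_right hexp (by linarith : 0 ≤ 1 - x),
    mul_nonneg (sq_nonneg x) (by nlinarith : 0 ≤ 1 - x - x ^ 2 - x ^ 3)]

section Products

variable {ι : Type*} (s : Finset ι) {x : ι → ℝ}

lemma prod_one_sub_le_exp_neg_sum (hx : ∀ i ∈ s, x i ≤ 1) :
    ∏ i ∈ s, (1 - x i) ≤ exp (-∑ i ∈ s, x i) := by
  rw [← sum_neg_distrib, exp_sum]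
  exact prod_le_prod (fun i hi => sub_nonneg.2 (hx i hi)) fun i _ => one_sub_le_exp_neg _

lemma exp_neg_sum_add_sq_le_prod_one_sub (hx : ∀ i ∈ s, 0 ≤ x i ∧ x i ≤ 1 / 2) :
    exp (-∑ i ∈ s, (x i + x i ^ 2)) ≤ ∏ i ∈ s, (1 - x i) := by
  rw [← sum_neg_distrib, exp_sum]
  exact prod_le_prod (fun i _ => (exp_pos _).le) fun i hi =>
    exp_neg_add_sq_le_one_sub (hx i hi).1 (hx i hi).2

end Products

lemma sum_range_natCast_add_one (m : ℕ) : ∑ i ∈ range m, ((i : ℝ) + 1) = m * (m + 1) / 2 := by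
  induction m with
  | zero => simp
  | succ m ih => rw [sum_range_succ, ih]; push_cast; ring

lemma tendsto_inv_sqrt_natCast_atTop_zero : Tendsto (fun n : ℕ => (√n)⁻¹) atTop (𝓝 0) :=
  tendsto_inv_atTop_zero.comp (tendsto_sqrt_atTop.comp tendsto_natCast_atTop_atTop)

lemma tendsto_div_natCast_of_tendsto_div_sqrt {m : ℕ → ℕ} {s : ℝ}
    (hm : Tendsto (fun n => (m n : ℝ) / √n) atTop (𝓝 s)) :
    Tendsto (fun n => (m n : ℝ) / n) atTop (𝓝 0) := by
  have h := hm.mul tendsto_inv_sqrt_natCast_atTop_zero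
  rw [mul_zero] at h
  refine h.congr fun n => ?_
  conv_rhs => rw [← mul_self_sqrt n.cast_nonneg]
  ring

lemma tendsto_sum_range_succ_div_of_tendsto_div_sqrt {m : ℕ → ℕ} {s : ℝ}
    (hm : Tendsto (fun n => (m n : ℝ) / √n) atTop (𝓝 s)) :
    Tendsto (fun n => ∑ i ∈ range (m n), ((i : ℝ) + 1) / n) atTop (𝓝 (s ^ 2 / 2)) := by
  have h := (hm.mul (hm.add tendsto_inv_sqrt_natCast_atTop_zero)).div_const 2
  rw [add_zero, ← sq] at h
  refine h.congr fun n => ?_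
  rw [← sum_div, sum_range_natCast_add_one]
  conv_rhs => rw [← mul_self_sqrt n.cast_nonneg]
  ring

lemma tendsto_sum_range_succ_div_sq_of_tendsto_div_sqrt {m : ℕ → ℕ} {s : ℝ}
    (hm : Tendsto (fun n => (m n : ℝ) / √n) atTop (𝓝 s)) :
    Tendsto (fun n => ∑ i ∈ range (m n), (((i : ℝ) + 1) / n) ^ 2) atTop (𝓝 0) := by
  have h := (hm.pow 3).mul tendsto_inv_sqrt_natCast_atTop_zero
  rw [mul_zero] at h
  refine squeeze_zero (fun n => by positivity) (fun n => ?_) h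
  calc ∑ i ∈ range (m n), (((i : ℝ) + 1) / n) ^ 2
      ≤ ∑ _i ∈ range (m n), ((m n : ℝ) / n) ^ 2 := by
        gcongr with i hi
        exact_mod_cast mem_range.1 hi
    _ = (m n / √n) ^ 3 * (√n)⁻¹ := by
        rw [sum_const, card_range, nsmul_eq_mul]
        conv_lhs => rw [← mul_self_sqrt n.cast_nonneg]
        ring

theorem tendsto_prod_one_sub_of_tendsto_div_sqrt {m : ℕ → ℕ} {s : ℝ}
    (hm : Tendsto (fun n => (m n : ℝ) / √n) atTop (𝓝 s)) :
    Tendsto (fun n => ∏ i ∈ range (m n), (1 - ((i : ℝ) + 1) / n)) atTop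
      (𝓝 (exp (-s ^ 2 / 2))) := by
  have hsmall : ∀ᶠ n in atTop, ∀ i ∈ range (m n),
      0 ≤ ((i : ℝ) + 1) / n ∧ ((i : ℝ) + 1) / n ≤ 1 / 2 := by
    filter_upwards [(tendsto_div_natCast_of_tendsto_div_sqrt hm).eventually
      (ge_mem_nhds (by norm_num : (0 : ℝ) < 1 / 2))] with n hn i hi
    refine ⟨by positivity, le_trans ?_ hn⟩
    gcongr
    exact_mod_cast mem_range.1 hi
  have hexp : Tendsto (fun x => exp (-x)) (𝓝 (s ^ 2 / 2)) (𝓝 (exp (-s ^ 2 / 2))) := by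
    rw [neg_div]
    exact (continuous_exp.comp continuous_neg).tendsto _
  have hA := tendsto_sum_range_succ_div_of_tendsto_div_sqrt hm
  have hAB : Tendsto (fun n => ∑ i ∈ range (m n), (((i : ℝ) + 1) / n + (((i : ℝ) + 1) / n) ^ 2))
      atTop (𝓝 (s ^ 2 / 2)) := by
    simpa only [sum_add_distrib, add_zero] using
      hA.add (tendsto_sum_range_succ_div_sq_of_tendsto_div_sqrt hm)
  refine tendsto_of_tendsto_of_tendsto_of_le_of_le' (hexp.comp hAB) (hexp.comp hA) ?_ ?_
  · filter_upwards [hsmall] with n hn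
    exact exp_neg_sum_add_sq_le_prod_one_sub _ hn
  · filter_upwards [hsmall] with n hn
    exact prod_one_sub_le_exp_neg_sum _ fun i hi => (hn i hi).2.trans (by norm_num)

lemma tendsto_natFloor_mul_add_one_div_atTop {s : ℝ} (hs : 0 ≤ s) :
    Tendsto (fun x : ℝ => ((⌊s * x⌋₊ + 1 : ℕ) : ℝ) / x) atTop (𝓝 s) := by
  have hup : Tendsto (fun x : ℝ => s + x⁻¹) atTop (𝓝 s) := by
    simpa using tendsto_inv_atTop_zero.const_add s
  refine tendsto_of_tendsto_of_tendsto_of_le_of_le' tendsto_const_nhds hup ?_ ?_ <;>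
    filter_upwards [eventually_gt_atTop 0] with x hx
  · rw [le_div_iff₀ hx]
    push_cast
    linarith [Nat.lt_floor_add_one (s * x)]
  · rw [div_le_iff₀ hx, add_mul, inv_mul_cancel₀ hx.ne']
    push_cast
    linarith [Nat.floor_le (by positivity : 0 ≤ s * x)]

lemma sum_range_ite_natCast_le {M : Type*} [AddCommMonoid M] {x : ℝ} (hx : 0 ≤ x) {n : ℕ}
    (hn : ⌊x⌋₊ + 1 ≤ n) (f : ℕ → M) :
    ∑ k ∈ range n, (if (k : ℝ) ≤ x then f k else 0) = ∑ k ∈ range (⌊x⌋₊ + 1), f k := by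
  rw [← sum_filter]
  congr 1
  ext k
  simp only [mem_filter, mem_range, ← Nat.le_floor_iff hx]
  omega

lemma sum_range_ite_natCast_le_of_neg {M : Type*} [AddCommMonoid M] {x : ℝ} (hx : x < 0)
    (n : ℕ) (f : ℕ → M) : ∑ k ∈ range n, (if (k : ℝ) ≤ x then f k else 0) = 0 :=
  sum_eq_zero fun k _ => if_neg (hx.trans_le k.cast_nonneg).not_ge

theorem tendsto_sum_spineProb_le_mul_sqrt (s : ℝ) :
    Tendsto (fun n : ℕ => ∑ k ∈ range n, if (k : ℝ) ≤ s * √n then spineProb n k else 0)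
      atTop (𝓝 (if 0 ≤ s then 1 - exp (-s ^ 2 / 2) else 0)) := by
  rcases lt_or_ge s 0 with hs | hs
  · rw [if_neg hs.not_ge]
    refine tendsto_const_nhds.congr' ?_
    filter_upwards [eventually_gt_atTop 0] with n hn
    exact (sum_range_ite_natCast_le_of_neg (mul_neg_of_neg_of_pos hs (by positivity)) _ _).symm
  · rw [if_pos hs]
    have hm : Tendsto (fun n : ℕ => ((⌊s * √n⌋₊ + 1 : ℕ) : ℝ) / √n) atTop (𝓝 s) :=
      (tendsto_natFloor_mul_add_one_div_atTop hs).comp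
        (tendsto_sqrt_atTop.comp tendsto_natCast_atTop_atTop)
    refine ((tendsto_prod_one_sub_of_tendsto_div_sqrt hm).const_sub 1).congr' ?_
    filter_upwards [eventually_gt_atTop 0,
      (tendsto_div_natCast_of_tendsto_div_sqrt hm).eventually (gt_mem_nhds one_pos)]
      with n hn hlt
    have hmn : ⌊s * √n⌋₊ + 1 ≤ n := by
      exact_mod_cast ((div_lt_one (by positivity)).1 hlt).le
    rw [sum_range_ite_natCast_le (by positivity) hmn, sum_range_spineProb hmn,
      spineTail_eq_prod hmn]

/-- The spine-length probabilities `P(λ_n = k) = (k+1)(n-1)! / (n^{k+1}(n-k-1)!)`,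
`k = 0,…,n-1`, sum to `1`, and `λ_n/√n` converges in distribution to a Rayleigh
random variable with density `s e^{-s²/2}` (stated via convergence of the
cumulative distribution functions at every point). -/
theorem spine_length_pmf_and_rayleigh_limit :
    (∀ n : ℕ, 1 ≤ n →
      ∑ k ∈ Finset.range n,
        ((k : ℝ) + 1) * Nat.factorial (n - 1) / ((n : ℝ) ^ (k + 1) * Nat.factorial (n - k - 1))
        = 1) ∧
    ∀ s : ℝ,
      Tendsto (fun n : ℕ =>
          ∑ k ∈ Finset.range n,
            if (k : ℝ) ≤ s * Real.sqrt n then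
              ((k : ℝ) + 1) * Nat.factorial (n - 1) /
                ((n : ℝ) ^ (k + 1) * Nat.factorial (n - k - 1))
            else 0)
        atTop (nhds (if 0 ≤ s then 1 - Real.exp (-s ^ 2 / 2) else 0)) :=
  ⟨fun _ hn => sum_range_spineProb_self hn, tendsto_sum_spineProb_le_mul_sqrt⟩
end

section
/- Let (Y_i) be i.i.d. nonnegative random variables with E[1 - e^{-qY₁}] ≤ C q ln(1/q) for small q > 0 and some constant C. Then for any α > 1/2, n^{-α} ∑_{i=1}^{⌊√n⌋} Y_i → 0 in probability as n → ∞. -/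
/-!
With `S = ∑_{i < ⌊√n⌋} Y_i` and `q = n^{-α} / ε`, the event `ε ≤ n^{-α} S` is `1 ≤ q S`, so
Markov's inequality for `1 - e^{-qS}` bounds its probability by `E[1 - e^{-qS}] / (1 - e^{-1})`.
Since `x ↦ 1 - e^{-x}` is subadditive on `[0, ∞)`, `E[1 - e^{-qS}] ≤ ⌊√n⌋ E[1 - e^{-qY₀}]`,
which the hypothesis bounds by `C √n q log (1/q)`, of order `n^{1/2 - α} log n → 0`.
-/

open MeasureTheory ProbabilityTheory Real Filter Topology

namespace Real

theorem one_sub_exp_neg_nonneg {x : ℝ} (hx : 0 ≤ x) : 0 ≤ 1 - exp (-x) :=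
  sub_nonneg.mpr (exp_le_one_iff.mpr (neg_nonpos.mpr hx))

theorem one_sub_exp_neg_sum_le_sum {ι : Type*} (s : Finset ι) {f : ι → ℝ}
    (hf : ∀ i ∈ s, 0 ≤ f i) :
    1 - exp (-∑ i ∈ s, f i) ≤ ∑ i ∈ s, (1 - exp (-f i)) := by
  classical
  induction s using Finset.induction_on with
  | empty => simp
  | insert a s ha ih =>
    rw [Finset.sum_insert ha, Finset.sum_insert ha, neg_add, exp_add]
    have hS := ih fun i hi ↦ hf i (Finset.mem_insert_of_mem hi)
    have hfa := one_sub_exp_neg_nonneg (hf a (Finset.mem_insert_self a s))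
    have hSnn := one_sub_exp_neg_nonneg
      (Finset.sum_nonneg fun i hi ↦ hf i (Finset.mem_insert_of_mem hi))
    -- `1 - e^{-a} e^{-S} = (1 - e^{-a}) + e^{-a} (1 - e^{-S})` and `e^{-a} ≤ 1`
    nlinarith [exp_pos (-f a)]

theorem tendsto_sqrt_mul_rpow_div_mul_log_one_div {α : ℝ} (hα : 1 / 2 < α) {ε : ℝ}
    (hε : 0 < ε) :
    Tendsto (fun x : ℝ ↦ √x * (x ^ (-α) / ε) * log (1 / (x ^ (-α) / ε))) atTop (𝓝 0) := by
  have hpow : Tendsto (fun x : ℝ ↦ x ^ (1 / 2 - α)) atTop (𝓝 0) := by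
    simpa [neg_sub] using tendsto_rpow_neg_atTop (by linarith : 0 < α - 1 / 2)
  have hlog : Tendsto (fun x : ℝ ↦ x ^ (1 / 2 - α) * log x) atTop (𝓝 0) := by
    refine (isLittleO_log_rpow_atTop (by linarith : 0 < α - 1 / 2)).tendsto_div_nhds_zero.congr'
      ?_
    filter_upwards [eventually_gt_atTop 0] with x hx
    rw [div_eq_mul_inv, ← rpow_neg hx.le, neg_sub, mul_comm]
  have hlim := (hpow.const_mul (log ε / ε)).add (hlog.const_mul (α / ε))
  rw [mul_zero, mul_zero, add_zero] at hlim
  refine hlim.congr' ?_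
  filter_upwards [eventually_gt_atTop 0] with x hx
  rw [sqrt_eq_rpow, one_div_div, log_div hε.ne' (rpow_pos_of_pos hx _).ne', log_rpow hx,
    show (1 / 2 - α) = (1 / 2 : ℝ) + -α by ring, rpow_add hx]
  field_simp
  ring

end Real

section

variable {Ω : Type*} [MeasurableSpace Ω] {μ : Measure Ω} [IsFiniteMeasure μ]

theorem integrable_one_sub_exp_neg {X : Ω → ℝ} (hX : AEMeasurable X μ) (h0 : ∀ ω, 0 ≤ X ω) :
    Integrable (fun ω ↦ 1 - exp (-X ω)) μ := by
  refine (integrable_const (1 : ℝ)).mono' (by fun_prop) (ae_of_all _ fun ω ↦ ?_)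
  rw [norm_eq_abs, abs_of_nonneg (one_sub_exp_neg_nonneg (h0 ω))]
  exact sub_le_self _ (exp_pos _).le

theorem mul_measureReal_one_le_le_integral_one_sub_exp_neg {X : Ω → ℝ} (hX : AEMeasurable X μ)
    (h0 : ∀ ω, 0 ≤ X ω) :
    (1 - exp (-1)) * μ.real {ω | 1 ≤ X ω} ≤ ∫ ω, 1 - exp (-X ω) ∂μ := by
  have hsub : {ω | 1 ≤ X ω} ⊆ {ω | 1 - exp (-1) ≤ 1 - exp (-X ω)} := fun ω (hω : 1 ≤ X ω) ↦ by
    simp only [Set.mem_ofPred_eq, sub_le_sub_iff_left, exp_le_exp, neg_le_neg_iff, hω]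
  calc (1 - exp (-1)) * μ.real {ω | 1 ≤ X ω}
      ≤ (1 - exp (-1)) * μ.real {ω | 1 - exp (-1) ≤ 1 - exp (-X ω)} := by
        gcongr
        · exact one_sub_exp_neg_nonneg zero_le_one
        · finiteness
    _ ≤ ∫ ω, 1 - exp (-X ω) ∂μ :=
        mul_meas_ge_le_integral_of_nonneg (ae_of_all _ fun ω ↦ one_sub_exp_neg_nonneg (h0 ω))
          (integrable_one_sub_exp_neg hX h0) _

theorem integral_one_sub_exp_neg_sum_le_card_mul {ι : Type*} {X : ι → Ω → ℝ} {Z : Ω → ℝ}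
    (h0 : ∀ i ω, 0 ≤ X i ω) (hident : ∀ i, IdentDistrib (X i) Z μ μ) (s : Finset ι) :
    ∫ ω, 1 - exp (-∑ i ∈ s, X i ω) ∂μ ≤ s.card * ∫ ω, 1 - exp (-Z ω) ∂μ := by
  have hint : ∀ i, Integrable (fun ω ↦ 1 - exp (-X i ω)) μ := fun i ↦
    integrable_one_sub_exp_neg (hident i).aemeasurable_fst (h0 i)
  have hsame : ∀ i, ∫ ω, 1 - exp (-X i ω) ∂μ = ∫ ω, 1 - exp (-Z ω) ∂μ := fun i ↦
    ((hident i).comp (u := fun x ↦ 1 - exp (-x)) (by fun_prop)).integral_eq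
  calc ∫ ω, 1 - exp (-∑ i ∈ s, X i ω) ∂μ
      ≤ ∫ ω, ∑ i ∈ s, (1 - exp (-X i ω)) ∂μ :=
        integral_mono (integrable_one_sub_exp_neg (Finset.aemeasurable_fun_sum _ fun i _ ↦
            (hident i).aemeasurable_fst) fun ω ↦ Finset.sum_nonneg fun i _ ↦ h0 i ω)
          (integrable_finsetSum _ fun i _ ↦ hint i)
          fun ω ↦ one_sub_exp_neg_sum_le_sum s fun i _ ↦ h0 i ω
    _ = s.card * ∫ ω, 1 - exp (-Z ω) ∂μ := by
        rw [integral_finsetSum _ fun i _ ↦ hint i, Finset.sum_congr rfl fun i _ ↦ hsame i,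
          Finset.sum_const, nsmul_eq_mul]

theorem mul_measureReal_one_le_mul_sum_le_card_mul {ι : Type*} {Y : ι → Ω → ℝ} {Z : Ω → ℝ}
    (h0 : ∀ i ω, 0 ≤ Y i ω) (hident : ∀ i, IdentDistrib (Y i) Z μ μ) {q : ℝ} (hq : 0 ≤ q)
    (s : Finset ι) :
    (1 - exp (-1)) * μ.real {ω | 1 ≤ q * ∑ i ∈ s, Y i ω}
      ≤ s.card * ∫ ω, 1 - exp (-q * Z ω) ∂μ := by
  simp only [Finset.mul_sum, neg_mul]
  exact (mul_measureReal_one_le_le_integral_one_sub_exp_neg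
      (Finset.aemeasurable_fun_sum _ fun i _ ↦ (hident i).aemeasurable_fst.const_mul q)
      fun ω ↦ Finset.sum_nonneg fun i _ ↦ mul_nonneg hq (h0 i ω)).trans
    (integral_one_sub_exp_neg_sum_le_card_mul (fun i ω ↦ mul_nonneg hq (h0 i ω))
      (fun i ↦ (hident i).comp (measurable_const_mul q)) s)

theorem measureReal_le_mul_sum_le {ι : Type*} {Y : ι → Ω → ℝ} {j : ι}
    (h0 : ∀ i ω, 0 ≤ Y i ω) (hident : ∀ i, IdentDistrib (Y i) (Y j) μ μ) {a ε L b : ℝ}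
    (ha : 0 ≤ a) (hε : 0 < ε) (hL : ∫ ω, 1 - exp (-(a / ε) * Y j ω) ∂μ ≤ L) (s : Finset ι)
    (hs : (s.card : ℝ) ≤ b) :
    μ.real {ω | ε ≤ a * ∑ i ∈ s, Y i ω} ≤ b * L / (1 - exp (-1)) := by
  have hevent : {ω | ε ≤ a * ∑ i ∈ s, Y i ω} = {ω | 1 ≤ a / ε * ∑ i ∈ s, Y i ω} := by
    ext ω
    rw [Set.mem_ofPred_eq, Set.mem_ofPred_eq, div_mul_eq_mul_div, le_div_iff₀ hε, one_mul]
  have hL0 : 0 ≤ L := by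
    refine le_trans (integral_nonneg fun ω ↦ ?_) hL
    rw [neg_mul]
    exact one_sub_exp_neg_nonneg (mul_nonneg (div_nonneg ha hε.le) (h0 j ω))
  rw [hevent, le_div_iff₀ (by simp), mul_comm]
  calc (1 - exp (-1)) * μ.real {ω | 1 ≤ a / ε * ∑ i ∈ s, Y i ω}
      ≤ s.card * ∫ ω, 1 - exp (-(a / ε) * Y j ω) ∂μ :=
        mul_measureReal_one_le_mul_sum_le_card_mul h0 hident (div_nonneg ha hε.le) s
    _ ≤ s.card * L := by gcongr
    _ ≤ b * L := by gcongr

end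

theorem sum_over_sqrt_tendsto_zero_in_probability_general
    {Ω : Type*} [MeasurableSpace Ω] (μ : Measure Ω) [IsProbabilityMeasure μ]
    (Y : ℕ → Ω → ℝ) (hpos : ∀ i ω, 0 ≤ Y i ω)
    (hident : ∀ i, IdentDistrib (Y i) (Y 0) μ μ)
    (C : ℝ)
    (hlap : ∃ q₀ > (0 : ℝ), ∀ q : ℝ, 0 < q → q < q₀ →
      ∫ ω, (1 - Real.exp (-q * Y 0 ω)) ∂μ ≤ C * q * Real.log (1 / q))
    (α : ℝ) (hα : 1 / 2 < α) :
    ∀ ε > (0 : ℝ),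
      Tendsto (fun n : ℕ =>
          μ {ω | ε ≤ (n : ℝ) ^ (-α) * ∑ i ∈ Finset.range (Nat.sqrt n), Y i ω})
        atTop (nhds 0) := by
  intro ε hε
  obtain ⟨q₀, hq₀, hlap⟩ := hlap
  set q : ℕ → ℝ := fun n ↦ (n : ℝ) ^ (-α) / ε
  set c := 1 - exp (-1)
  have hq_small : ∀ᶠ n : ℕ in atTop, 0 < q n ∧ q n < q₀ := by
    have hq_lim : Tendsto q atTop (𝓝 0) := by
      simpa using
        ((tendsto_rpow_neg_atTop (by linarith)).comp tendsto_natCast_atTop_atTop).div_const ε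
    filter_upwards [hq_lim.eventually_lt_const hq₀, eventually_gt_atTop 0] with n hn hn0
    exact ⟨div_pos (rpow_pos_of_pos (Nat.cast_pos.mpr hn0) _) hε, hn⟩
  have hbound : ∀ᶠ n : ℕ in atTop,
      μ.real {ω | ε ≤ (n : ℝ) ^ (-α) * ∑ i ∈ Finset.range (Nat.sqrt n), Y i ω}
        ≤ √n * q n * log (1 / q n) * C / c := by
    filter_upwards [hq_small] with n ⟨hq0, hqq₀⟩
    refine (measureReal_le_mul_sum_le hpos hident (by positivity) hε (hlap (q n) hq0 hqq₀) _
      (by simpa using nat_sqrt_le_real_sqrt)).trans_eq ?_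
    ring
  have hlim : Tendsto (fun n : ℕ ↦ √n * q n * log (1 / q n) * C / c) atTop (𝓝 0) := by
    have h := (((tendsto_sqrt_mul_rpow_div_mul_log_one_div hα hε).comp
      tendsto_natCast_atTop_atTop).mul_const C).div_const c
    rwa [zero_mul, zero_div] at h
  have hreal := squeeze_zero' (Eventually.of_forall fun n ↦ measureReal_nonneg) hbound hlim
  simpa [ofReal_measureReal] using ENNReal.tendsto_ofReal hreal

/-- Let `(Y_i)` be i.i.d. nonnegative random variables with
`E[1 - e^{-qY₁}] ≤ C q ln(1/q)` for small `q > 0`. Then for any `α > 1/2`,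
`n^{-α} ∑_{i=1}^{⌊√n⌋} Y_i → 0` in probability as `n → ∞`. -/
theorem sum_over_sqrt_tendsto_zero_in_probability
    {Ω : Type*} [MeasurableSpace Ω] (μ : Measure Ω) [IsProbabilityMeasure μ]
    (Y : ℕ → Ω → ℝ) (hmeas : ∀ i, Measurable (Y i)) (hpos : ∀ i ω, 0 ≤ Y i ω)
    (hindep : iIndepFun Y μ)
    (hident : ∀ i, IdentDistrib (Y i) (Y 0) μ μ)
    (C : ℝ)
    (hlap : ∃ q₀ > (0 : ℝ), ∀ q : ℝ, 0 < q → q < q₀ →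
      ∫ ω, (1 - Real.exp (-q * Y 0 ω)) ∂μ ≤ C * q * Real.log (1 / q))
    (α : ℝ) (hα : 1 / 2 < α) :
    ∀ ε > (0 : ℝ),
      Tendsto (fun n : ℕ =>
          μ {ω | ε ≤ (n : ℝ) ^ (-α) * ∑ i ∈ Finset.range (Nat.sqrt n), Y i ω})
        atTop (nhds 0) :=
  sum_over_sqrt_tendsto_zero_in_probability_general μ Y hpos hident C hlap α hα
end

section
/- Let (Y_i) be i.i.d. nonnegative random variables with E[1 - e^{-qY₁}] ≥ c q ln(1/q) for small q > 0 and some constant c > 0. Then n^{-1/2} ∑_{i=1}^{⌊√n⌋} Y_i → ∞ in probability as n → ∞. -/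
/-!
Chernoff's bound at `q = n^{-1/2}` gives
`P(∑_{i<m} Y_i ≤ a √n) ≤ e^{a} E[e^{-q Y₁}]^m` with `m = ⌊√n⌋`, and
`E[e^{-q Y₁}] = 1 - E[1 - e^{-q Y₁}] ≤ exp(-c q log(1/q))`. Since `m q ≥ 1/2`, the
right-hand side is at most `e^{a} q^{c/2} = e^{a} n^{-c/4} → 0`.
-/

open MeasureTheory ProbabilityTheory Real Filter

namespace ProbabilityTheory

variable {Ω : Type*} [MeasurableSpace Ω] {μ : Measure Ω} {t : ℝ}

lemma IdentDistrib.mgf_eq {Ω' : Type*} [MeasurableSpace Ω'] {ν : Measure Ω'}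
    {X : Ω → ℝ} {X' : Ω' → ℝ} (h : IdentDistrib X X' μ ν) : mgf X μ t = mgf X' ν t :=
  (h.comp (measurable_exp.comp (measurable_const_mul t))).integral_eq

lemma integrable_exp_mul_of_nonpos_of_nonneg [IsFiniteMeasure μ] {X : Ω → ℝ}
    (hX : AEMeasurable X μ) (hpos : ∀ ω, 0 ≤ X ω) (ht : t ≤ 0) :
    Integrable (fun ω => exp (t * X ω)) μ := by
  refine (integrable_const (1 : ℝ)).mono' (hX.const_mul t).exp.aestronglyMeasurable ?_
  filter_upwards with ω
  rw [norm_of_nonneg (exp_pos _).le, exp_le_one_iff]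
  exact mul_nonpos_of_nonpos_of_nonneg ht (hpos ω)

lemma mgf_le_exp_neg_integral_one_sub_exp [IsProbabilityMeasure μ] {X : Ω → ℝ}
    (h_int : Integrable (fun ω => exp (t * X ω)) μ) :
    mgf X μ t ≤ exp (-∫ ω, (1 - exp (t * X ω)) ∂μ) := by
  have h : ∫ ω, (1 - exp (t * X ω)) ∂μ = 1 - mgf X μ t := by
    rw [integral_sub (integrable_const 1) h_int, integral_const, probReal_univ, one_smul, mgf]
  rw [h]
  linarith [add_one_le_exp (-(1 - mgf X μ t))]

theorem iIndepFun.measureReal_sum_le_le_exp_mul_mgf_pow [IsFiniteMeasure μ] {ι : Type*}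
    {Y : ι → Ω → ℝ} {i₀ : ι} (hindep : iIndepFun Y μ) (hmeas : ∀ i, Measurable (Y i))
    (hident : ∀ i, IdentDistrib (Y i) (Y i₀) μ μ) (ht : 0 ≤ t)
    (h_int : Integrable (fun ω => exp (-t * Y i₀ ω)) μ) (s : Finset ι) (b : ℝ) :
    μ.real {ω | ∑ i ∈ s, Y i ω ≤ b} ≤ exp (t * b) * mgf (Y i₀) μ (-t) ^ s.card := by
  have h_int_sum := hindep.integrable_exp_mul_sum hmeas (s := s) fun i _ =>
    ((hident i).symm.comp (measurable_exp.comp (measurable_const_mul (-t)))).integrable_snd h_int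
  calc μ.real {ω | ∑ i ∈ s, Y i ω ≤ b}
      ≤ exp (t * b) * mgf (∑ i ∈ s, Y i) μ (-t) := by
        simpa only [Finset.sum_apply, neg_neg] using
          measure_le_le_exp_mul_mgf b (neg_nonpos.2 ht) h_int_sum
    _ = exp (t * b) * mgf (Y i₀) μ (-t) ^ s.card := by
        rw [hindep.mgf_sum hmeas, Finset.prod_congr rfl fun i _ => (hident i).mgf_eq,
          Finset.prod_const]

theorem iIndepFun.measureReal_mul_sum_le_le_exp_mul_rpow [IsProbabilityMeasure μ] {ι : Type*}
    {Y : ι → Ω → ℝ} {i₀ : ι} (hindep : iIndepFun Y μ) (hmeas : ∀ i, Measurable (Y i))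
    (hpos : ∀ ω, 0 ≤ Y i₀ ω) (hident : ∀ i, IdentDistrib (Y i) (Y i₀) μ μ)
    {c q : ℝ} (hc : 0 ≤ c) (hq : 0 < q) (hq1 : q ≤ 1)
    (hlap : c * q * log (1 / q) ≤ ∫ ω, (1 - exp (-q * Y i₀ ω)) ∂μ)
    {s : Finset ι} (hs : 1 / 2 ≤ s.card * q) (a : ℝ) :
    μ.real {ω | q * ∑ i ∈ s, Y i ω ≤ a} ≤ exp a * q ^ (c / 2) := by
  have h_int := integrable_exp_mul_of_nonpos_of_nonneg (μ := μ) (hmeas i₀).aemeasurable hpos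
    (neg_nonpos.2 hq.le)
  have h_mgf : mgf (Y i₀) μ (-q) ≤ exp (-(c * q * log (1 / q))) :=
    (mgf_le_exp_neg_integral_one_sub_exp h_int).trans (exp_le_exp.2 (neg_le_neg hlap))
  have h_set : {ω | q * ∑ i ∈ s, Y i ω ≤ a} = {ω | ∑ i ∈ s, Y i ω ≤ a / q} := by
    ext ω
    exact (le_div_iff₀' hq).symm
  have h_exponent : -(s.card * q) * (c * log (1 / q)) ≤ log q * (c / 2) := by
    rw [one_div, log_inv]
    nlinarith [mul_nonpos_of_nonneg_of_nonpos hc (log_nonpos hq.le hq1)]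
  calc μ.real {ω | q * ∑ i ∈ s, Y i ω ≤ a}
      ≤ exp (q * (a / q)) * mgf (Y i₀) μ (-q) ^ s.card := by
        rw [h_set]
        exact hindep.measureReal_sum_le_le_exp_mul_mgf_pow hmeas hident hq.le h_int s _
    _ ≤ exp a * exp (-(c * q * log (1 / q))) ^ s.card := by
        rw [mul_div_cancel₀ _ hq.ne']
        gcongr
        exact mgf_nonneg
    _ = exp a * exp (-(s.card * q) * (c * log (1 / q))) := by
        rw [← exp_nat_mul]
        ring_nf
    _ ≤ exp a * q ^ (c / 2) := by
        rw [rpow_def_of_pos hq]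
        gcongr

end ProbabilityTheory

lemma Real.half_le_nat_sqrt_mul_rpow_neg_half {n : ℕ} (hn : 0 < n) :
    1 / 2 ≤ (Nat.sqrt n : ℝ) * (n : ℝ) ^ (-(1 : ℝ) / 2) := by
  have h_sq : (n : ℝ) ≤ (2 * Nat.sqrt n) ^ 2 := by
    have h_lt := Nat.lt_succ_sqrt' n
    have h_root_pos := Nat.sqrt_pos.2 hn
    exact_mod_cast (by nlinarith : n ≤ (2 * Nat.sqrt n) ^ 2)
  have h_sqrt : √(n : ℝ) ≤ 2 * Nat.sqrt n := sqrt_le_iff.2 ⟨by positivity, h_sq⟩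
  have h_pos : 0 < √(n : ℝ) := sqrt_pos.2 (by exact_mod_cast hn)
  rw [neg_div, rpow_neg (Nat.cast_nonneg n), ← sqrt_eq_rpow, ← div_eq_mul_inv,
    le_div_iff₀ h_pos]
  linarith

/-- Let `(Y_i)` be i.i.d. nonnegative random variables with
`E[1 - e^{-qY₁}] ≥ c q ln(1/q)` for small `q > 0`, where `c > 0`. Then
`n^{-1/2} ∑_{i=1}^{⌊√n⌋} Y_i → ∞` in probability as `n → ∞`, i.e.
`P(n^{-1/2} ∑_{i=1}^{⌊√n⌋} Y_i ≤ a) → 0` for every `a > 0`. -/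
theorem sum_over_sqrt_tendsto_infty_in_probability
    {Ω : Type*} [MeasurableSpace Ω] (μ : Measure Ω) [IsProbabilityMeasure μ]
    (Y : ℕ → Ω → ℝ) (hmeas : ∀ i, Measurable (Y i)) (hpos : ∀ i ω, 0 ≤ Y i ω)
    (hindep : iIndepFun (m := fun _ => (inferInstance : MeasurableSpace ℝ)) Y μ)
    (hident : ∀ i, IdentDistrib (Y i) (Y 0) μ μ)
    (c : ℝ) (hc : 0 < c)
    (hlap : ∃ q₀ > (0 : ℝ), ∀ q : ℝ, 0 < q → q < q₀ →
      c * q * Real.log (1 / q) ≤ ∫ ω, (1 - Real.exp (-q * Y 0 ω)) ∂μ) :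
    ∀ a > (0 : ℝ),
      Tendsto (fun n : ℕ =>
          μ {ω | (n : ℝ) ^ (-(1 : ℝ) / 2) * ∑ i ∈ Finset.range (Nat.sqrt n), Y i ω ≤ a})
        atTop (nhds 0) := by
  obtain ⟨q₀, hq₀, hlap⟩ := hlap
  intro a _
  have hq_lim : Tendsto (fun n : ℕ => (n : ℝ) ^ (-(1 : ℝ) / 2)) atTop (nhds 0) := by
    simpa only [neg_div, Function.comp_def] using
      (tendsto_rpow_neg_atTop one_half_pos).comp tendsto_natCast_atTop_atTop
  have h_bound : ∀ᶠ n : ℕ in atTop,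
      μ.real {ω | (n : ℝ) ^ (-(1 : ℝ) / 2) * ∑ i ∈ Finset.range (Nat.sqrt n), Y i ω ≤ a} ≤
        exp a * ((n : ℝ) ^ (-(1 : ℝ) / 2)) ^ (c / 2) := by
    filter_upwards [eventually_gt_atTop 0, hq_lim.eventually_lt_const (lt_min hq₀ one_pos)]
      with n hn hq_small
    have hq : 0 < (n : ℝ) ^ (-(1 : ℝ) / 2) := by positivity
    refine hindep.measureReal_mul_sum_le_le_exp_mul_rpow hmeas (hpos 0) hident hc.le hq
      (hq_small.trans_le (min_le_right _ _)).le
      (hlap _ hq (hq_small.trans_le (min_le_left _ _))) ?_ a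
    simpa only [Finset.card_range] using half_le_nat_sqrt_mul_rpow_neg_half hn
  have h_lim : Tendsto (fun n : ℕ => exp a * ((n : ℝ) ^ (-(1 : ℝ) / 2)) ^ (c / 2)) atTop
      (nhds 0) := by
    simpa [zero_rpow (half_pos hc).ne'] using
      ((continuousAt_rpow_const 0 (c / 2) (Or.inr (half_pos hc).le)).tendsto.comp
        hq_lim).const_mul (exp a)
  rw [← ENNReal.tendsto_toReal_zero_iff]
  exact squeeze_zero' (.of_forall fun _ => measureReal_nonneg) h_bound h_lim
end
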